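/- arXiv:1801.07444 — 6 statements merged into one kernel-verified Lean document; each statement's English description precedes it below -/
import Mathlib

section
/- Let V be an open sector at 0 in ℂ, let m ≥ 1, and let φ₁, …, φ_m and ψ₁, …, ψ_m be Puiseux polynomials of u⁻¹ without constant terms, all regarded as holomorphic functions on V via the fixed branch of log. Suppose there exist complex constants C_{ij} and D_{ij} (1 ≤ i, j ≤ m) such that the m×m matrix-valued functions F(u) = (C_{ij}·e^{φ_j(u) − ψ_i(u)})_{i,j} and G(u) = (D_{ij}·e^{ψ_j(u) − φ_i(u)})_{i,j} satisfy F(u)·G(u) = G(u)·F(u) = Id for every u ∈ V, and such that every entry of F and every entry of G has moderate growth on V. Then there exists a permutation σ of {1, …, m} such that ψ_{σ(j)} = φ_j (equality of all coefficients) for every j. -/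
/-- A Puiseux polynomial of `u⁻¹` without constant term: a finitely supported
family of complex coefficients indexed by rationals, all of whose support
consists of negative rationals.  Two such are equal iff all coefficients agree. -/
structure PuiseuxPoly where
  coeff : ℚ →₀ ℂ
  support_neg : ∀ a ∈ coeff.support, a < 0

/-- Evaluation of a Puiseux polynomial at the point `u = s·e^{iθ}` (with `s > 0`)
of a sector, via the fixed branch of `log` given by `log u = log s + iθ`,
so that `u^a = exp (a · (log s + iθ))`. -/
noncomputable def PuiseuxPoly.eval (φ : PuiseuxPoly) (s θ : ℝ) : ℂ :=
  φ.coeff.sum fun a c =>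
    c * Complex.exp ((a : ℂ) * ((Real.log s : ℂ) + (θ : ℂ) * Complex.I))

/-- A function on the open sector `V = {s·e^{iθ} : 0 < s < r, α < θ < β}`
(written in the coordinates `(s, θ)`) has moderate growth on `V` if there are
`C > 0` and `M > 0` with `|g(u)| ≤ C·|u|^{-M}` on `V`. -/
def ModerateGrowthOn (r α β : ℝ) (g : ℝ → ℝ → ℂ) : Prop :=
  ∃ C M : ℝ, 0 < C ∧ 0 < M ∧ ∀ s θ : ℝ, s ∈ Set.Ioo 0 r → θ ∈ Set.Ioo α β →
    ‖g s θ‖ ≤ C * s ^ (-M)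

open Filter Topology

/-! ### Auxiliary material -/

noncomputable def fevald (d : ℚ →₀ ℂ) (s θ : ℝ) : ℂ :=
  d.sum fun a c =>
    c * Complex.exp ((a : ℂ) * ((Real.log s : ℂ) + (θ : ℂ) * Complex.I))

lemma fevald_eq (d : ℚ →₀ ℂ) {s : ℝ} (hs : 0 < s) (θ : ℝ) :
    fevald d s θ = ∑ a ∈ d.support,
      ((s ^ (a : ℝ) : ℝ) : ℂ) * (d a * Complex.exp ((a : ℂ) * (θ : ℂ) * Complex.I)) := by
  rw [fevald, Finsupp.sum]
  refine Finset.sum_congr rfl fun a _ => ?_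
  have h1 : ((a : ℂ) * ((Real.log s : ℂ) + (θ : ℂ) * Complex.I))
      = ((((a:ℝ) * Real.log s : ℝ)) : ℂ) + (a : ℂ) * (θ : ℂ) * Complex.I := by
    push_cast; ring
  rw [h1, Complex.exp_add, Real.rpow_def_of_pos hs, mul_comm (Real.log s)]
  rw [← Complex.ofReal_exp]
  ring

lemma tendsto_scaled_re (d : ℚ →₀ ℂ) (θ : ℝ) (a₀ : ℚ) (ha₀ : a₀ ∈ d.support)
    (hmin : ∀ a ∈ d.support, a₀ ≤ a) :
    Tendsto (fun s : ℝ => (s ^ (-(a₀:ℝ))) * (fevald d s θ).re) (𝓝[>] 0)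
      (𝓝 ((d a₀ * Complex.exp ((a₀ : ℂ) * (θ : ℂ) * Complex.I)).re)) := by
  have key : ∀ s : ℝ, 0 < s →
      (s ^ (-(a₀:ℝ))) * (fevald d s θ).re
        = ∑ a ∈ d.support, (s ^ ((a:ℝ) - (a₀:ℝ)))
            * (d a * Complex.exp ((a : ℂ) * (θ : ℂ) * Complex.I)).re := by
    intro s hs
    rw [fevald_eq d hs θ, Complex.re_sum, Finset.mul_sum]
    refine Finset.sum_congr rfl fun a _ => ?_
    rw [Complex.re_ofReal_mul, ← mul_assoc, ← Real.rpow_add hs]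
    ring_nf
  have h2 : Tendsto (fun s : ℝ => ∑ a ∈ d.support, (s ^ ((a:ℝ) - (a₀:ℝ)))
      * (d a * Complex.exp ((a : ℂ) * (θ : ℂ) * Complex.I)).re) (𝓝[>] 0)
      (𝓝 (∑ a ∈ d.support, if a = a₀ then
        (d a₀ * Complex.exp ((a₀ : ℂ) * (θ : ℂ) * Complex.I)).re else 0)) := by
    refine tendsto_finset_sum _ fun a ha => ?_
    by_cases h : a = a₀
    · subst h
      simp only [sub_self, Real.rpow_zero, one_mul, if_true]
      exact tendsto_const_nhds
    · simp only [if_neg h]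
      have hpos : 0 < (a:ℝ) - (a₀:ℝ) := by
        have h1 := hmin a ha
        have h2 : a₀ < a := lt_of_le_of_ne h1 (Ne.symm h)
        exact_mod_cast sub_pos.mpr (by exact_mod_cast h2)
      have : Tendsto (fun s : ℝ => s ^ ((a:ℝ) - (a₀:ℝ))) (𝓝[>] 0) (𝓝 0) := by
        have hc : ContinuousAt (fun s : ℝ => s ^ ((a:ℝ) - (a₀:ℝ))) 0 :=
          Real.continuousAt_rpow_const 0 _ (Or.inr hpos.le)
        have := hc.continuousWithinAt (s := Set.Ioi 0)
        simpa [Real.zero_rpow hpos.ne'] using this.tendsto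
      simpa using this.mul_const _
  rw [Finset.sum_ite_eq' d.support a₀, if_pos ha₀] at h2
  refine h2.congr' ?_
  filter_upwards [self_mem_nhdsWithin] with s hs
  exact (key s hs).symm

lemma trig_zero (c x y t : ℝ) (hc : c ≠ 0) (h1 : x * Real.cos t - y * Real.sin t = 0)
    (h2 : -(x * (Real.sin t * c)) - y * (Real.cos t * c) = 0) : x = 0 ∧ y = 0 := by
  have h3 : x * Real.sin t + y * Real.cos t = 0 := by
    have hc' : c * (x * Real.sin t + y * Real.cos t) = 0 := by linear_combination -h2
    exact (mul_eq_zero.mp hc').resolve_left hc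
  constructor
  · linear_combination Real.cos t * h1 + Real.sin t * h3 - x * Real.sin_sq_add_cos_sq t
  · linear_combination -Real.sin t * h1 + Real.cos t * h3 - y * Real.sin_sq_add_cos_sq t

lemma trig_vanish {c x y θ₀ : ℝ} (hc : c ≠ 0)
    (h : ∀ᶠ θ in 𝓝 θ₀, x * Real.cos (c * θ) - y * Real.sin (c * θ) = 0) :
    x = 0 ∧ y = 0 := by
  set H : ℝ → ℝ := fun θ => x * Real.cos (c * θ) - y * Real.sin (c * θ) with hH
  have hd : HasDerivAt H
      (x * (-Real.sin (c * θ₀) * c) - y * (Real.cos (c * θ₀) * c)) θ₀ := by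
    have hlin : HasDerivAt (fun θ : ℝ => c * θ) c θ₀ := by
      simpa using (hasDerivAt_id θ₀).const_mul c
    have hcos : HasDerivAt (fun θ : ℝ => Real.cos (c * θ)) (-Real.sin (c * θ₀) * c) θ₀ :=
      (Real.hasDerivAt_cos (c * θ₀)).comp θ₀ hlin
    have hsin : HasDerivAt (fun θ : ℝ => Real.sin (c * θ)) (Real.cos (c * θ₀) * c) θ₀ :=
      (Real.hasDerivAt_sin (c * θ₀)).comp θ₀ hlin
    exact (hcos.const_mul x).sub (hsin.const_mul y)
  have h0 : H θ₀ = 0 := h.self_of_nhds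
  have heq : deriv H θ₀ = 0 := by
    have hE : H =ᶠ[𝓝 θ₀] fun _ => 0 := h
    rw [hE.deriv_eq]; simp
  rw [hd.deriv] at heq
  have h2 : -(x * (Real.sin (c * θ₀) * c)) - y * (Real.cos (c * θ₀) * c) = 0 := by
    linear_combination heq
  exact trig_zero c x y (c * θ₀) hc h0 h2

lemma keyA (r α β : ℝ) (hr : 0 < r) (hαβ : α < β) (d : ℚ →₀ ℂ)
    (hneg : ∀ a ∈ d.support, a < 0)
    (h1 : ModerateGrowthOn r α β (fun s θ => Complex.exp (fevald d s θ)))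
    (h2 : ModerateGrowthOn r α β (fun s θ => Complex.exp (-(fevald d s θ)))) :
    d = 0 := by
  by_contra hd
  have hsupp : d.support.Nonempty := Finsupp.support_nonempty_iff.mpr hd
  set a₀ := d.support.min' hsupp with ha₀def
  have ha₀ : a₀ ∈ d.support := d.support.min'_mem hsupp
  have hmin : ∀ a ∈ d.support, a₀ ≤ a := fun a ha => d.support.min'_le a ha
  have ha₀neg : a₀ < 0 := hneg a₀ ha₀
  have hε : (0:ℝ) < -(a₀:ℝ) := by
    have : (a₀:ℝ) < 0 := by exact_mod_cast ha₀neg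
    linarith
  obtain ⟨C₁, M₁, hC₁, hM₁, hb₁⟩ := h1
  obtain ⟨C₂, M₂, hC₂, hM₂, hb₂⟩ := h2
  set L := max (Real.log C₁) (Real.log C₂) with hL
  set K := max M₁ M₂ with hK
  have hbound : ∀ θ ∈ Set.Ioo α β, ∀ s : ℝ, s ∈ Set.Ioo 0 (min r 1) →
      |(fevald d s θ).re| ≤ L + K * (-Real.log s) := by
    intro θ hθ s hs
    have hs0 : 0 < s := hs.1
    have hsr : s < r := lt_of_lt_of_le hs.2 (min_le_left _ _)
    have hs1 : s < 1 := lt_of_lt_of_le hs.2 (min_le_right _ _)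
    have hlogneg : Real.log s < 0 := Real.log_neg hs0 hs1
    have hpow : ∀ M : ℝ, Real.log (s ^ (-M)) = -M * Real.log s := fun M =>
      Real.log_rpow hs0 _
    have e1 : (fevald d s θ).re ≤ Real.log C₁ + (-M₁) * Real.log s := by
      have h := hb₁ s θ ⟨hs0, hsr⟩ hθ
      rw [Complex.norm_exp] at h
      have := (Real.le_log_iff_exp_le (by positivity)).mpr h
      rwa [Real.log_mul hC₁.ne' (by positivity), hpow M₁] at this
    have e2 : -(fevald d s θ).re ≤ Real.log C₂ + (-M₂) * Real.log s := by
      have h := hb₂ s θ ⟨hs0, hsr⟩ hθ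
      rw [Complex.norm_exp, Complex.neg_re] at h
      have := (Real.le_log_iff_exp_le (by positivity)).mpr h
      rwa [Real.log_mul hC₂.ne' (by positivity), hpow M₂] at this
    have hM1K : (-M₁) * Real.log s ≤ K * (-Real.log s) := by
      have : M₁ ≤ K := le_max_left _ _
      nlinarith
    have hM2K : (-M₂) * Real.log s ≤ K * (-Real.log s) := by
      have : M₂ ≤ K := le_max_right _ _
      nlinarith
    rw [abs_le]
    constructor
    · have := le_trans e2 (add_le_add (le_max_right (Real.log C₁) _) hM2K)
      linarith
    · exact le_trans e1 (add_le_add (le_max_left _ (Real.log C₂)) hM1K)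
  have hzero : ∀ θ ∈ Set.Ioo α β,
      (d a₀ * Complex.exp ((a₀ : ℂ) * (θ : ℂ) * Complex.I)).re = 0 := by
    intro θ hθ
    have htend := tendsto_scaled_re d θ a₀ ha₀ hmin
    set A := (d a₀ * Complex.exp ((a₀ : ℂ) * (θ : ℂ) * Complex.I)).re with hA
    have habs : Tendsto (fun s : ℝ => |(s ^ (-(a₀:ℝ))) * (fevald d s θ).re|)
        (𝓝[>] (0:ℝ)) (𝓝 |A|) := htend.abs
    have hBt : Tendsto (fun s : ℝ => (s ^ (-(a₀:ℝ))) * (L + K * (-Real.log s)))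
        (𝓝[>] (0:ℝ)) (𝓝 0) := by
      have t1 : Tendsto (fun s : ℝ => s ^ (-(a₀:ℝ))) (𝓝[>] (0:ℝ)) (𝓝 0) := by
        have hc : ContinuousAt (fun s : ℝ => s ^ (-(a₀:ℝ))) 0 :=
          Real.continuousAt_rpow_const 0 _ (Or.inr hε.le)
        have := (hc.continuousWithinAt (s := Set.Ioi (0:ℝ))).tendsto
        simpa [Real.zero_rpow hε.ne'] using this
      have t2 := tendsto_log_mul_rpow_nhdsGT_zero hε
      have t3 : Tendsto (fun s : ℝ => (s ^ (-(a₀:ℝ))) * L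
          + (-(Real.log s * s ^ (-(a₀:ℝ)))) * K) (𝓝[>] (0:ℝ)) (𝓝 0) := by
        have := (t1.mul_const L).add ((t2.neg).mul_const K)
        simpa using this
      refine t3.congr fun s => ?_
      ring
    have hle : ∀ᶠ s in 𝓝[>] (0:ℝ),
        |(s ^ (-(a₀:ℝ))) * (fevald d s θ).re|
          ≤ (s ^ (-(a₀:ℝ))) * (L + K * (-Real.log s)) := by
      have hmem : Set.Ioo (0:ℝ) (min r 1) ∈ 𝓝[>] (0:ℝ) :=
        Ioo_mem_nhdsGT_of_mem ⟨le_refl _, lt_min hr one_pos⟩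
      filter_upwards [hmem] with s hs
      have hs0 : 0 < s := hs.1
      rw [abs_mul, abs_of_nonneg (Real.rpow_nonneg hs0.le _)]
      exact mul_le_mul_of_nonneg_left (hbound θ hθ s hs) (Real.rpow_nonneg hs0.le _)
    have : |A| ≤ 0 := le_of_tendsto_of_tendsto habs hBt hle
    exact abs_eq_zero.mp (le_antisymm this (abs_nonneg _))
  set θ₀ := (α + β) / 2 with hθ₀def
  have hθ₀ : θ₀ ∈ Set.Ioo α β := ⟨by rw [hθ₀def]; linarith, by rw [hθ₀def]; linarith⟩
  have hre : ∀ θ ∈ Set.Ioo α β,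
      (d a₀).re * Real.cos ((a₀:ℝ) * θ) - (d a₀).im * Real.sin ((a₀:ℝ) * θ) = 0 := by
    intro θ hθ
    have h := hzero θ hθ
    have hcast : ((a₀ : ℂ) * (θ : ℂ)) = (((a₀:ℝ) * θ : ℝ) : ℂ) := by push_cast; ring
    rwa [hcast, Complex.mul_re, Complex.exp_ofReal_mul_I_re,
      Complex.exp_ofReal_mul_I_im] at h
  have hev : ∀ᶠ θ in 𝓝 θ₀,
      (d a₀).re * Real.cos ((a₀:ℝ) * θ) - (d a₀).im * Real.sin ((a₀:ℝ) * θ) = 0 := by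
    filter_upwards [isOpen_Ioo.mem_nhds hθ₀] with θ hθ using hre θ hθ
  have hane : ((a₀:ℝ)) ≠ 0 := by
    intro h; exact absurd (by exact_mod_cast h : a₀ = (0:ℚ)) ha₀neg.ne
  obtain ⟨hx, hy⟩ := trig_vanish hane hev
  exact (Finsupp.mem_support_iff.mp ha₀) (Complex.ext hx hy)

lemma PuiseuxPoly.ext' {a b : PuiseuxPoly} (h : a.coeff = b.coeff) : a = b := by
  cases a; cases b; simp_all

lemma eval_sub' (a b : PuiseuxPoly) (s θ : ℝ) :
    a.eval s θ - b.eval s θ = fevald (a.coeff - b.coeff) s θ := by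
  rw [fevald, Finsupp.sum_sub_index (fun p q1 q2 => by rw [sub_mul])]
  rfl

lemma mod_cancel_const {r α β : ℝ} {K : ℂ} (hK : K ≠ 0) {f : ℝ → ℝ → ℂ}
    (h : ModerateGrowthOn r α β (fun s θ => K * f s θ)) : ModerateGrowthOn r α β f := by
  obtain ⟨C, M, hC, hM, hb⟩ := h
  have hK0 : 0 < ‖K‖ := norm_pos_iff.mpr hK
  refine ⟨C / ‖K‖, M, by positivity, hM, fun s θ hs hθ => ?_⟩
  have := hb s θ hs hθ
  rw [norm_mul] at this
  rw [div_mul_eq_mul_div, le_div_iff₀ hK0]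
  calc ‖f s θ‖ * ‖K‖ = ‖K‖ * ‖f s θ‖ := by ring
  _ ≤ C * s ^ (-M) := this

lemma mod_trans {r α β : ℝ} {a b c : PuiseuxPoly}
    (h1 : ModerateGrowthOn r α β (fun s θ => Complex.exp (a.eval s θ - b.eval s θ)))
    (h2 : ModerateGrowthOn r α β (fun s θ => Complex.exp (b.eval s θ - c.eval s θ))) :
    ModerateGrowthOn r α β (fun s θ => Complex.exp (a.eval s θ - c.eval s θ)) := by
  obtain ⟨C₁, M₁, hC₁, hM₁, hb₁⟩ := h1
  obtain ⟨C₂, M₂, hC₂, hM₂, hb₂⟩ := h2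
  refine ⟨C₁ * C₂, M₁ + M₂, by positivity, by positivity, fun s θ hs hθ => ?_⟩
  have key : Complex.exp (a.eval s θ - c.eval s θ)
      = Complex.exp (a.eval s θ - b.eval s θ) * Complex.exp (b.eval s θ - c.eval s θ) := by
    rw [← Complex.exp_add]; ring_nf
  show ‖Complex.exp (a.eval s θ - c.eval s θ)‖ ≤ _
  rw [key, norm_mul]
  have hs0 : (0:ℝ) < s := hs.1
  calc ‖Complex.exp (a.eval s θ - b.eval s θ)‖
        * ‖Complex.exp (b.eval s θ - c.eval s θ)‖
      ≤ (C₁ * s ^ (-M₁)) * (C₂ * s ^ (-M₂)) :=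
        mul_le_mul (hb₁ s θ hs hθ) (hb₂ s θ hs hθ) (by positivity) (by positivity)
    _ = C₁ * C₂ * s ^ (-(M₁ + M₂)) := by
        rw [neg_add, Real.rpow_add hs0]; ring

lemma exists_perm_ne_zero {m : ℕ} (M : Matrix (Fin m) (Fin m) ℂ) (h : M.det ≠ 0) :
    ∃ σ : Equiv.Perm (Fin m), ∀ i, M (σ i) i ≠ 0 := by
  rw [Matrix.det_apply'] at h
  obtain ⟨σ, hσ⟩ := Finset.exists_ne_zero_of_sum_ne_zero h
  refine ⟨σ, fun i hzero => ?_⟩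
  apply hσ.2
  rw [Finset.prod_eq_zero (f := fun j => M (σ j) j) (Finset.mem_univ i) hzero, mul_zero]

/-- If the matrices `F(u) = (C_{ij}·e^{φ_j(u) − ψ_i(u)})` and
`G(u) = (D_{ij}·e^{ψ_j(u) − φ_i(u)})` are mutually inverse at every point of an
open sector at `0` and all their entries have moderate growth there, then the
Puiseux polynomials `ψ_i` are a permutation of the `φ_j`. -/
theorem statement0 (r α β : ℝ) (hr : 0 < r) (hαβ : α < β)
    (hsec : β - α ≤ 2 * Real.pi)
    (m : ℕ) (hm : 1 ≤ m) (φ ψ : Fin m → PuiseuxPoly) (C D : Fin m → Fin m → ℂ)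
    (hFG : ∀ s θ : ℝ, s ∈ Set.Ioo 0 r → θ ∈ Set.Ioo α β →
      (Matrix.of fun i j : Fin m =>
          C i j * Complex.exp ((φ j).eval s θ - (ψ i).eval s θ)) *
        (Matrix.of fun i j : Fin m =>
          D i j * Complex.exp ((ψ j).eval s θ - (φ i).eval s θ)) = 1)
    (hGF : ∀ s θ : ℝ, s ∈ Set.Ioo 0 r → θ ∈ Set.Ioo α β →
      (Matrix.of fun i j : Fin m =>
          D i j * Complex.exp ((ψ j).eval s θ - (φ i).eval s θ)) *
        (Matrix.of fun i j : Fin m =>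
          C i j * Complex.exp ((φ j).eval s θ - (ψ i).eval s θ)) = 1)
    (hFmod : ∀ i j : Fin m, ModerateGrowthOn r α β
      (fun s θ => C i j * Complex.exp ((φ j).eval s θ - (ψ i).eval s θ)))
    (hGmod : ∀ i j : Fin m, ModerateGrowthOn r α β
      (fun s θ => D i j * Complex.exp ((ψ j).eval s θ - (φ i).eval s θ))) :
    ∃ σ : Equiv.Perm (Fin m), ∀ j : Fin m, ψ (σ j) = φ j := by
  have hs₀ : r / 2 ∈ Set.Ioo 0 r := ⟨by linarith, by linarith⟩
  have hθ₀ : (α + β) / 2 ∈ Set.Ioo α β := ⟨by linarith, by linarith⟩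
  have hFG0 := hFG (r/2) ((α+β)/2) hs₀ hθ₀
  have hGF0 := hGF (r/2) ((α+β)/2) hs₀ hθ₀
  have hdetF : (Matrix.of fun i j : Fin m =>
      C i j * Complex.exp ((φ j).eval (r/2) ((α+β)/2) - (ψ i).eval (r/2) ((α+β)/2))).det ≠ 0 := by
    have h := congrArg Matrix.det hFG0
    rw [Matrix.det_mul, Matrix.det_one] at h
    exact left_ne_zero_of_mul_eq_one h
  have hdetG : (Matrix.of fun i j : Fin m =>
      D i j * Complex.exp ((ψ j).eval (r/2) ((α+β)/2) - (φ i).eval (r/2) ((α+β)/2))).det ≠ 0 := by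
    have h := congrArg Matrix.det hGF0
    rw [Matrix.det_mul, Matrix.det_one] at h
    exact left_ne_zero_of_mul_eq_one h
  obtain ⟨σ, hσ⟩ := exists_perm_ne_zero _ hdetF
  obtain ⟨τ, hτ⟩ := exists_perm_ne_zero _ hdetG
  have hCne : ∀ j, C (σ j) j ≠ 0 := by
    intro j hzero
    exact hσ j (by simp [Matrix.of_apply, hzero])
  have hDne : ∀ i, D (τ i) i ≠ 0 := by
    intro i hzero
    exact hτ i (by simp [Matrix.of_apply, hzero])
  have hR : ∀ j, ModerateGrowthOn r α β
      (fun s θ => Complex.exp ((φ j).eval s θ - (ψ (σ j)).eval s θ)) :=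
    fun j => mod_cancel_const (hCne j) (hFmod (σ j) j)
  have hQ : ∀ i, ModerateGrowthOn r α β
      (fun s θ => Complex.exp ((ψ i).eval s θ - (φ (τ i)).eval s θ)) :=
    fun i => mod_cancel_const (hDne i) (hGmod (τ i) i)
  set π := σ.trans τ with hπ
  have hchain : ∀ k (j : Fin m), ModerateGrowthOn r α β
      (fun s θ => Complex.exp ((ψ (σ j)).eval s θ - (φ ((π ^ (k+1)) j)).eval s θ)) := by
    intro k
    induction k with
    | zero =>
      intro j
      have : (π ^ 1) j = τ (σ j) := by simp [hπ, Equiv.trans_apply]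
      rw [this]
      exact hQ (σ j)
    | succ k ih =>
      intro j
      have heq : (π ^ (k+1+1)) j = τ (σ ((π ^ (k+1)) j)) := by
        rw [pow_succ']
        simp [hπ, Equiv.Perm.mul_apply, Equiv.trans_apply]
      rw [heq]
      exact mod_trans (ih j) (mod_trans (hR ((π ^ (k+1)) j)) (hQ (σ ((π ^ (k+1)) j))))
  have hBack : ∀ j, ModerateGrowthOn r α β
      (fun s θ => Complex.exp ((ψ (σ j)).eval s θ - (φ j).eval s θ)) := by
    intro j
    have hn : 0 < orderOf π := orderOf_pos π
    obtain ⟨k, hk⟩ : ∃ k, orderOf π = k + 1 := ⟨orderOf π - 1, (Nat.succ_pred_eq_of_pos hn).symm⟩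
    have h := hchain k j
    rw [← hk, pow_orderOf_eq_one π] at h
    simpa using h
  refine ⟨σ, fun j => ?_⟩
  apply PuiseuxPoly.ext'
  have hsuppneg : ∀ a ∈ ((φ j).coeff - (ψ (σ j)).coeff).support, a < 0 := by
    intro a ha
    rcases Finset.mem_union.mp (Finsupp.support_sub ha) with h | h
    · exact (φ j).support_neg a h
    · exact (ψ (σ j)).support_neg a h
  have hfun1 : (fun s θ : ℝ => Complex.exp (fevald ((φ j).coeff - (ψ (σ j)).coeff) s θ))
      = fun s θ => Complex.exp ((φ j).eval s θ - (ψ (σ j)).eval s θ) := by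
    funext s θ; rw [← eval_sub']
  have hfun2 : (fun s θ : ℝ => Complex.exp (-(fevald ((φ j).coeff - (ψ (σ j)).coeff) s θ)))
      = fun s θ => Complex.exp ((ψ (σ j)).eval s θ - (φ j).eval s θ) := by
    funext s θ; rw [← eval_sub', neg_sub]
  have hd := keyA r α β hr hαβ ((φ j).coeff - (ψ (σ j)).coeff) hsuppneg
    (by rw [hfun1]; exact hR j) (by rw [hfun2]; exact hBack j)
  exact (sub_eq_zero.mp hd).symm
end

section
/- Let V be an open sector at 0 in ℂ and let φ and ψ be Puiseux polynomials of u⁻¹ without constant terms, regarded as holomorphic functions on V via the fixed branch of log. If Re φ(u) = Re ψ(u) for all u in some nonempty open subset of V, then φ = ψ, i.e., all coefficients of φ and ψ coincide; in particular Re φ = Re ψ on all of V. -/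
open Complex Filter Finset Topology

/-- Linear independence of real exponentials with distinct rational exponents. -/
lemma expind : ∀ (n : ℕ) (S : Finset ℚ), S.card = n → ∀ (g : ℚ → ℝ),
    (∀ t : ℝ, ∑ a ∈ S, g a * Real.exp ((a : ℝ) * t) = 0) → ∀ a ∈ S, g a = 0 := by
  intro n
  induction n with
  | zero =>
    intro S hS g h a ha
    rw [Finset.card_eq_zero.mp hS] at ha
    exact absurd ha (Finset.notMem_empty a)
  | succ n ih =>
    intro S hS g h a ha
    have hne : S.Nonempty := ⟨a, ha⟩
    set m := S.max' hne with hm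
    have hmS : m ∈ S := S.max'_mem hne
    have key : g m = 0 := by
      have h2 : ∀ t : ℝ, (∑ b ∈ S, g b * Real.exp (((b : ℝ) - (m : ℝ)) * t)) = 0 := by
        intro t
        have he : (∑ b ∈ S, g b * Real.exp (((b : ℝ) - (m : ℝ)) * t))
            = (∑ b ∈ S, g b * Real.exp ((b : ℝ) * t)) * Real.exp (-(m : ℝ) * t) := by
          rw [Finset.sum_mul]
          refine Finset.sum_congr rfl fun b _ => ?_
          rw [mul_assoc, ← Real.exp_add]
          ring_nf
        rw [he, h t, zero_mul]
      have h1 : Tendsto (fun t : ℝ => ∑ b ∈ S, g b * Real.exp (((b : ℝ) - (m : ℝ)) * t))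
          atTop (𝓝 (∑ b ∈ S, if b = m then g m else 0)) := by
        refine tendsto_finset_sum _ fun b hb => ?_
        by_cases hbm : b = m
        · subst hbm
          simp only [sub_self, zero_mul, Real.exp_zero, mul_one, if_true]
          exact tendsto_const_nhds
        · simp only [hbm, if_false]
          have hblt : (b : ℝ) - (m : ℝ) < 0 := by
            have h3 : b < m := lt_of_le_of_ne (S.le_max' b hb) hbm
            have h4 : (b : ℝ) < (m : ℝ) := by exact_mod_cast h3
            linarith
          have h5 : Tendsto (fun t : ℝ => Real.exp (((b : ℝ) - (m : ℝ)) * t)) atTop (𝓝 0) := by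
            have hpos : (0:ℝ) < (m : ℝ) - (b : ℝ) := by linarith
            have ht : Tendsto (fun t : ℝ => ((m : ℝ) - (b : ℝ)) * t) atTop atTop :=
              Tendsto.const_mul_atTop hpos tendsto_id
            have h6 := Real.tendsto_exp_neg_atTop_nhds_zero.comp ht
            refine h6.congr fun t => ?_
            simp only [Function.comp_apply]
            ring_nf
          simpa using h5.const_mul (g b)
      have h1' : Tendsto (fun t : ℝ => ∑ b ∈ S, g b * Real.exp (((b : ℝ) - (m : ℝ)) * t))
          atTop (𝓝 (g m)) := by
        rwa [Finset.sum_ite_eq' S m (fun _ => g m), if_pos hmS] at h1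
      have h0 : Tendsto (fun t : ℝ => ∑ b ∈ S, g b * Real.exp (((b : ℝ) - (m : ℝ)) * t))
          atTop (𝓝 0) := by
        simp only [h2]; exact tendsto_const_nhds
      exact tendsto_nhds_unique h1' h0
    by_cases ham : a = m
    · rw [ham]; exact key
    · have haS' : a ∈ S.erase m := Finset.mem_erase.mpr ⟨ham, ha⟩
      refine ih (S.erase m) ?_ g ?_ a haS'
      · rw [Finset.card_erase_of_mem hmS, hS]; rfl
      · intro t
        rw [Finset.sum_erase_eq_sub hmS, h t, key, zero_mul, sub_zero]

/-- If two Puiseux polynomials of `u⁻¹` without constant terms have equal real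
parts on a nonempty open subset of an open sector at `0` (written in the sector
coordinates `(s, θ) ↦ s·e^{iθ}`), then they are equal (all coefficients
coincide); in particular their real parts agree on the whole sector. -/
theorem statement2 (r α β : ℝ) (hr : 0 < r) (hαβ : α < β)
    (hsec : β - α ≤ 2 * Real.pi)
    (φ ψ : PuiseuxPoly)
    (U : Set (ℝ × ℝ)) (hUopen : IsOpen U) (hUne : U.Nonempty)
    (hUsub : U ⊆ Set.Ioo 0 r ×ˢ Set.Ioo α β)
    (hre : ∀ p ∈ U, (φ.eval p.1 p.2).re = (ψ.eval p.1 p.2).re) :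
    φ = ψ ∧ ∀ s θ : ℝ, s ∈ Set.Ioo 0 r → θ ∈ Set.Ioo α β →
      (φ.eval s θ).re = (ψ.eval s θ).re := by
  classical
  set χ : ℚ →₀ ℂ := φ.coeff - ψ.coeff with hχ
  set Ω : Set (ℝ × ℝ) := Set.Ioi (0:ℝ) ×ˢ (Set.univ : Set ℝ) with hΩ
  set F : ℝ × ℝ → ℝ := fun p =>
    (∑ a ∈ χ.support,
      χ a * Complex.exp ((a : ℂ) * (Complex.log (p.1 : ℂ) + (p.2 : ℂ) * I))).re with hF
  have hFeq : ∀ p : ℝ × ℝ, 0 < p.1 →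
      F p = (φ.eval p.1 p.2).re - (ψ.eval p.1 p.2).re := by
    intro p hp1
    have hlog : ((Real.log p.1 : ℝ) : ℂ) = Complex.log (p.1 : ℂ) :=
      Complex.ofReal_log hp1.le
    have hsum : (∑ a ∈ χ.support,
          χ a * Complex.exp ((a : ℂ) * (Complex.log (p.1 : ℂ) + (p.2 : ℂ) * I)))
        = φ.eval p.1 p.2 - ψ.eval p.1 p.2 := by
      have hh : (∑ a ∈ χ.support,
            χ a * Complex.exp ((a : ℂ) * (Complex.log (p.1 : ℂ) + (p.2 : ℂ) * I)))
          = χ.sum fun a c =>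
              c * Complex.exp ((a : ℂ) * (Complex.log (p.1 : ℂ) + (p.2 : ℂ) * I)) := rfl
      rw [hh, hχ, Finsupp.sum_sub_index (fun a b₁ b₂ => sub_mul b₁ b₂ _)]
      unfold PuiseuxPoly.eval
      rw [hlog]
    simp only [hF, hsum, Complex.sub_re]
  have hΩpre : IsPreconnected Ω := ((convex_Ioi (0:ℝ)).prod convex_univ).isPreconnected
  have hFA : AnalyticOnNhd ℝ F Ω := by
    intro p hp
    have hp1 : (0:ℝ) < p.1 := hp.1
    have hfst : AnalyticAt ℝ (fun q : ℝ × ℝ => ((q.1 : ℂ))) p :=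
      (Complex.ofRealCLM.comp (ContinuousLinearMap.fst ℝ ℝ ℝ)).analyticAt p
    have hsnd : AnalyticAt ℝ (fun q : ℝ × ℝ => ((q.2 : ℂ))) p :=
      (Complex.ofRealCLM.comp (ContinuousLinearMap.snd ℝ ℝ ℝ)).analyticAt p
    have hclog : AnalyticAt ℝ Complex.log ((fun q : ℝ × ℝ => ((q.1 : ℂ))) p) :=
      (analyticAt_clog (Complex.ofReal_mem_slitPlane.2 hp1)).restrictScalars
    have hlog : AnalyticAt ℝ (fun q : ℝ × ℝ => Complex.log (q.1 : ℂ)) p :=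
      AnalyticAt.comp (g := Complex.log) (f := fun q : ℝ × ℝ => ((q.1 : ℂ))) hclog hfst
    have hinner : AnalyticAt ℝ
        (fun q : ℝ × ℝ => Complex.log (q.1 : ℂ) + (q.2 : ℂ) * I) p :=
      hlog.add (hsnd.mul analyticAt_const)
    have hsum : AnalyticAt ℝ (fun q : ℝ × ℝ => ∑ a ∈ χ.support,
        χ a * Complex.exp ((a : ℂ) * (Complex.log (q.1 : ℂ) + (q.2 : ℂ) * I))) p := by
      refine Finset.analyticAt_fun_sum _ fun a _ => ?_
      have harg : AnalyticAt ℝ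
          (fun q : ℝ × ℝ => (a : ℂ) * (Complex.log (q.1 : ℂ) + (q.2 : ℂ) * I)) p :=
        analyticAt_const.mul hinner
      have hexp : AnalyticAt ℝ Complex.exp
          ((fun q : ℝ × ℝ => (a : ℂ) * (Complex.log (q.1 : ℂ) + (q.2 : ℂ) * I)) p) :=
        analyticAt_cexp.restrictScalars
      exact analyticAt_const.mul (AnalyticAt.comp (g := Complex.exp)
        (f := fun q : ℝ × ℝ => (a : ℂ) * (Complex.log (q.1 : ℂ) + (q.2 : ℂ) * I))
        hexp harg)
    exact (Complex.reCLM.analyticAt _).comp hsum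
  obtain ⟨z₀, hz₀⟩ := hUne
  have hz₀Ω : z₀ ∈ Ω := ⟨(hUsub hz₀).1.1, trivial⟩
  have hev : F =ᶠ[𝓝 z₀] 0 := by
    filter_upwards [hUopen.mem_nhds hz₀] with p hp
    have hps : (0:ℝ) < p.1 := (hUsub hp).1.1
    simp [hFeq p hps, hre p hp]
  have hF0 : Set.EqOn F 0 Ω :=
    hFA.eqOn_zero_of_preconnected_of_eventuallyEq_zero hΩpre hz₀Ω hev
  have hcoeff : ∀ θ : ℝ, ∀ a ∈ χ.support,
      (χ a * Complex.exp ((a : ℂ) * ((θ : ℂ) * I))).re = 0 := by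
    intro θ
    refine expind χ.support.card χ.support rfl _ ?_
    intro t
    have hs : (0:ℝ) < Real.exp t := Real.exp_pos t
    have hFz : F (Real.exp t, θ) = 0 := hF0 ⟨hs, trivial⟩
    have hlog : Complex.log ((Real.exp t : ℝ) : ℂ) = (t : ℂ) := by
      rw [← Complex.ofReal_log hs.le, Real.log_exp]
    have hterm : ∀ a : ℚ,
        (χ a * Complex.exp ((a : ℂ) * ((θ : ℂ) * I))).re * Real.exp ((a : ℝ) * t)
          = (χ a * Complex.exp ((a : ℂ) * ((t : ℂ) + (θ : ℂ) * I))).re := by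
      intro a
      have h1 : (a : ℂ) * ((t : ℂ) + (θ : ℂ) * I)
          = (((a : ℝ) * t : ℝ) : ℂ) + (a : ℂ) * ((θ : ℂ) * I) := by
        push_cast; ring
      rw [h1, Complex.exp_add, ← Complex.ofReal_exp,
        show χ a * ((Real.exp ((a:ℝ)*t) : ℂ) * Complex.exp ((a : ℂ) * ((θ : ℂ) * I)))
          = (Real.exp ((a:ℝ)*t) : ℂ) * (χ a * Complex.exp ((a : ℂ) * ((θ : ℂ) * I)))
          from by ring, Complex.re_ofReal_mul, mul_comm]
    rw [Finset.sum_congr rfl fun a _ => hterm a, ← Complex.re_sum]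
    simp only [hF, hlog] at hFz
    exact hFz
  have hχ0 : ∀ a : ℚ, χ a = 0 := by
    intro a
    by_cases ha : a ∈ χ.support
    · have haneg : a < 0 := by
        by_contra hge
        have h1 : φ.coeff a = 0 := by
          by_contra hc
          exact hge (φ.support_neg a (Finsupp.mem_support_iff.mpr hc))
        have h2 : ψ.coeff a = 0 := by
          by_contra hc
          exact hge (ψ.support_neg a (Finsupp.mem_support_iff.mpr hc))
        have : χ a = 0 := by rw [hχ]; simp [h1, h2]
        exact (Finsupp.mem_support_iff.mp ha) this
      have hane : (a : ℝ) ≠ 0 := by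
        simp only [ne_eq, Rat.cast_eq_zero]
        exact ne_of_lt haneg
      have hre0 : (χ a).re = 0 := by
        have := hcoeff 0 a ha
        simpa using this
      have him0 : (χ a).im = 0 := by
        have h := hcoeff (-Real.pi / (2 * (a : ℝ))) a ha
        have hθ : (a : ℂ) * (((-Real.pi / (2 * (a : ℝ)) : ℝ) : ℂ) * I)
            = ((-Real.pi / 2 : ℝ) : ℂ) * I := by
          push_cast
          rw [show (a : ℂ) * (-(Real.pi : ℂ) / (2 * (a : ℂ)) * I)
              = ((a : ℂ) / (a : ℂ)) * (-(Real.pi : ℂ) / 2 * I) from by ring,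
            div_self (by exact_mod_cast hane)]
          ring
        rw [hθ, Complex.exp_mul_I, ← Complex.ofReal_cos, ← Complex.ofReal_sin] at h
        rw [show (-Real.pi / 2 : ℝ) = -(Real.pi / 2) from by ring] at h
        simp only [Real.cos_neg, Real.cos_pi_div_two, Real.sin_neg,
          Real.sin_pi_div_two] at h
        simp only [Complex.ofReal_zero, Complex.ofReal_one, zero_add, neg_mul,
          one_mul] at h
        simpa [Complex.mul_re] using h
      exact Complex.ext hre0 him0
    · exact Finsupp.notMem_support_iff.mp ha
  have hc : φ.coeff = ψ.coeff := by
    have : χ = 0 := Finsupp.ext hχ0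
    rw [hχ] at this
    exact sub_eq_zero.mp this
  have hφψ : φ = ψ := by
    cases φ; cases ψ; simpa using hc
  exact ⟨hφψ, fun s θ _ _ => by rw [hφψ]⟩
end

section
/- Let χ₁, …, χ_p be pairwise distinct Puiseux polynomials of u⁻¹ without constant terms, regarded as holomorphic functions on an open sector V₀ at 0 in ℂ via the fixed branch of log. Then there exists an open subsector V of V₀ such that for every pair of indices j ≠ k, either Re χ_j(u) > Re χ_k(u) for all u ∈ V, or Re χ_j(u) < Re χ_k(u) for all u ∈ V. -/
open Filter Topology Set

/-- The value of the "sum of `c_a u^a`" function determined by a coefficient finsupp. -/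
noncomputable def Gval (g : ℚ →₀ ℂ) (s θ : ℝ) : ℂ :=
  g.sum fun a c => c * Complex.exp ((a : ℂ) * ((Real.log s : ℂ) + (θ : ℂ) * Complex.I))

/-- The minimal exponent of a coefficient finsupp (0 if empty support). -/
noncomputable def minExp (g : ℚ →₀ ℂ) : ℚ :=
  if h : g.support.Nonempty then g.support.min' h else 0

/-- Real part of the leading angular factor. -/
noncomputable def leadRe (g : ℚ →₀ ℂ) (θ : ℝ) : ℝ :=
  (g (minExp g) * Complex.exp ((minExp g : ℂ) * (θ : ℂ) * Complex.I)).re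

lemma minExp_mem (g : ℚ →₀ ℂ) (hne : g.support.Nonempty) : minExp g ∈ g.support := by
  rw [minExp, dif_pos hne]; exact g.support.min'_mem hne

lemma countable_lead_zero (g : ℚ →₀ ℂ) (hne : g.support.Nonempty)
    (hneg : ∀ a ∈ g.support, a < 0) :
    {θ : ℝ | leadRe g θ = 0}.Countable := by
  have hmem := minExp_mem g hne
  have hc : g (minExp g) ≠ 0 := Finsupp.mem_support_iff.mp hmem
  have ha : ((minExp g : ℝ)) ≠ 0 := by
    have := hneg _ hmem
    exact ne_of_lt (by exact_mod_cast this)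
  set c := g (minExp g) with hcdef
  set a : ℝ := (minExp g : ℝ) with hadef
  apply Set.Countable.mono ?_ (Set.countable_range
    (fun k : ℤ => ((2 * (k : ℝ) + 1) * Real.pi / 2 - Complex.arg c) / a))
  intro θ hθ
  have key : leadRe g θ = ‖c‖ * Real.cos (Complex.arg c + a * θ) := by
    rw [leadRe]
    have h1 : c * Complex.exp ((minExp g : ℂ) * (θ : ℂ) * Complex.I)
        = ((‖c‖ : ℝ) : ℂ) *
          Complex.exp (((Complex.arg c + a * θ : ℝ) : ℂ) * Complex.I) := by
      rw [hadef]
      conv_lhs => rw [← Complex.norm_mul_exp_arg_mul_I c]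
      rw [mul_assoc, ← Complex.exp_add]
      congr 1
      push_cast
      ring_nf
    rw [← hcdef, h1, Complex.re_ofReal_mul, Complex.exp_ofReal_mul_I_re]
  have hcos : Real.cos (Complex.arg c + a * θ) = 0 := by
    have h0 : leadRe g θ = 0 := hθ
    rw [key] at h0
    rcases mul_eq_zero.mp h0 with h | h
    · exact absurd h (norm_ne_zero_iff.mpr hc)
    · exact h
  obtain ⟨k, hk⟩ := Real.cos_eq_zero_iff.mp hcos
  refine ⟨k, ?_⟩
  field_simp
  linarith [hk]

lemma eventually_pos_Gval (g : ℚ →₀ ℂ) (hne : g.support.Nonempty)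
    (hneg : ∀ a ∈ g.support, a < 0) (θ₀ : ℝ) (hpos : 0 < leadRe g θ₀) :
    ∀ᶠ q : ℝ × ℝ in (nhdsWithin 0 (Set.Ioi 0)) ×ˢ nhds θ₀, 0 < (Gval g q.1 q.2).re := by
  set a₀ : ℚ := minExp g with ha₀def
  have ha₀mem : a₀ ∈ g.support := minExp_mem g hne
  have hmin : ∀ a ∈ g.support, a₀ ≤ a := by
    intro a hA
    rw [ha₀def, minExp, dif_pos hne]
    exact g.support.min'_le a hA
  set h : ℚ → ℝ → ℝ := fun a θ => (g a * Complex.exp ((a : ℂ) * (θ : ℂ) * Complex.I)).re with hh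
  have hcont : ∀ a : ℚ, Continuous fun θ : ℝ => h a θ := by
    intro a
    apply Complex.continuous_re.comp
    exact continuous_const.mul (Complex.continuous_exp.comp (by fun_prop))
  have hA : ∀ s θ : ℝ, (Gval g s θ).re
      = ∑ a ∈ g.support, Real.exp ((a : ℝ) * Real.log s) * h a θ := by
    intro s θ
    rw [Gval, Finsupp.sum, Complex.re_sum]
    refine Finset.sum_congr rfl fun a _ => ?_
    have e1 : (a : ℂ) * ((Real.log s : ℂ) + (θ : ℂ) * Complex.I)
        = (((a : ℝ) * Real.log s : ℝ) : ℂ) + (a : ℂ) * (θ : ℂ) * Complex.I := by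
      push_cast; ring
    rw [e1, Complex.exp_add, ← Complex.ofReal_exp, mul_left_comm, Complex.re_ofReal_mul]
  have hB : ∀ s θ : ℝ, ∑ a ∈ g.support, Real.exp ((a : ℝ) * Real.log s) * h a θ
      = Real.exp ((a₀ : ℝ) * Real.log s) *
        ∑ a ∈ g.support, Real.exp (((a : ℝ) - (a₀ : ℝ)) * Real.log s) * h a θ := by
    intro s θ
    rw [Finset.mul_sum]
    refine Finset.sum_congr rfl fun a _ => ?_
    rw [← mul_assoc, ← Real.exp_add]
    congr 2
    ring
  have hlim : (∑ a ∈ g.support, if a = a₀ then h a₀ θ₀ else 0) = h a₀ θ₀ := by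
    rw [Finset.sum_ite_eq' g.support a₀ (fun _ => h a₀ θ₀), if_pos ha₀mem]
  have hC : Filter.Tendsto (fun q : ℝ × ℝ =>
      ∑ a ∈ g.support, Real.exp (((a : ℝ) - (a₀ : ℝ)) * Real.log q.1) * h a q.2)
      ((nhdsWithin 0 (Set.Ioi 0)) ×ˢ nhds θ₀) (nhds (h a₀ θ₀)) := by
    rw [← hlim]
    apply tendsto_finset_sum
    intro a ha
    by_cases hcase : a = a₀
    · have heq : (fun q : ℝ × ℝ =>
          Real.exp (((a : ℝ) - (a₀ : ℝ)) * Real.log q.1) * h a q.2)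
          = fun q : ℝ × ℝ => h a q.2 := by
        funext q
        rw [hcase]
        simp
      rw [if_pos hcase, heq, hcase]
      exact ((hcont a₀).tendsto θ₀).comp tendsto_snd
    · rw [if_neg hcase]
      have haa : (0 : ℝ) < (a : ℝ) - (a₀ : ℝ) := by
        have : a₀ < a := lt_of_le_of_ne (hmin a ha) (Ne.symm hcase)
        have : (a₀ : ℝ) < (a : ℝ) := by exact_mod_cast this
        linarith
      have T1 : Filter.Tendsto (fun s : ℝ => Real.exp (((a : ℝ) - (a₀ : ℝ)) * Real.log s))
          (nhdsWithin 0 (Set.Ioi 0)) (nhds 0) :=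
        Real.tendsto_exp_atBot.comp
          (Real.tendsto_log_nhdsGT_zero.const_mul_atBot haa)
      have T2 : Filter.Tendsto (fun q : ℝ × ℝ =>
          Real.exp (((a : ℝ) - (a₀ : ℝ)) * Real.log q.1) * h a q.2)
          ((nhdsWithin 0 (Set.Ioi 0)) ×ˢ nhds θ₀) (nhds (0 * h a θ₀)) :=
        (T1.comp tendsto_fst).mul (((hcont a).tendsto θ₀).comp tendsto_snd)
      rwa [zero_mul] at T2
  have hpos' : 0 < h a₀ θ₀ := hpos
  have hev := hC.eventually (eventually_gt_nhds hpos')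
  filter_upwards [hev] with q hq
  rw [hA, hB]
  exact mul_pos (Real.exp_pos _) hq

lemma Gval_neg (g : ℚ →₀ ℂ) (s θ : ℝ) : Gval (-g) s θ = -(Gval g s θ) := by
  rw [Gval, Gval, Finsupp.sum_neg_index (by intro a; simp)]
  simp only [neg_mul]
  rw [Finsupp.sum, Finsupp.sum, Finset.sum_neg_distrib]

lemma minExp_neg (g : ℚ →₀ ℂ) : minExp (-g) = minExp g := by
  simp only [minExp, Finsupp.support_neg]

lemma leadRe_neg (g : ℚ →₀ ℂ) (θ : ℝ) : leadRe (-g) θ = -(leadRe g θ) := by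
  rw [leadRe, leadRe, minExp_neg, Finsupp.neg_apply, neg_mul, Complex.neg_re]

/-- Given pairwise distinct Puiseux polynomials `χ₁, …, χ_p` of `u⁻¹` without
constant terms on an open sector `V₀ = {s·e^{iθ} : 0 < s < r, α < θ < β}`,
there is an open subsector `V = {s·e^{iθ} : 0 < s < r', α' < θ < β'}`
(with `0 < r' ≤ r` and `α < α' < β' < β`) on which, for every pair `j ≠ k`,
either `Re χ_j > Re χ_k` everywhere or `Re χ_j < Re χ_k` everywhere. -/
theorem statement3 (r α β : ℝ) (hr : 0 < r) (hαβ : α < β)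
    (hsec : β - α ≤ 2 * Real.pi)
    (p : ℕ) (χ : Fin p → PuiseuxPoly) (hdist : Function.Injective χ) :
    ∃ r' α' β' : ℝ, 0 < r' ∧ r' ≤ r ∧ α < α' ∧ α' < β' ∧ β' < β ∧
      ∀ j k : Fin p, j ≠ k →
        (∀ s θ : ℝ, s ∈ Set.Ioo 0 r' → θ ∈ Set.Ioo α' β' →
          ((χ k).eval s θ).re < ((χ j).eval s θ).re) ∨
        (∀ s θ : ℝ, s ∈ Set.Ioo 0 r' → θ ∈ Set.Ioo α' β' →
          ((χ j).eval s θ).re < ((χ k).eval s θ).re) := by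
  classical
  set d : Fin p → Fin p → (ℚ →₀ ℂ) := fun j k => (χ j).coeff - (χ k).coeff with hd
  have hdne : ∀ j k, j ≠ k → d j k ≠ 0 := by
    intro j k hjk h0
    apply hjk
    apply hdist
    have hco : (χ j).coeff = (χ k).coeff := sub_eq_zero.mp h0
    cases hj : χ j; cases hk : χ k
    rw [hj, hk] at hco
    simp_all
  have hdsupp : ∀ j k, ∀ a ∈ (d j k).support, a < 0 := by
    intro j k a ha
    have hsub : (d j k).support ⊆ (χ j).coeff.support ∪ (χ k).coeff.support :=
      Finsupp.support_sub
    rcases Finset.mem_union.mp (hsub ha) with h | h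
    · exact (χ j).support_neg a h
    · exact (χ k).support_neg a h
  -- choose θ₀ avoiding the (countably many) bad angles
  have hbad : ∀ q : Fin p × Fin p,
      {θ : ℝ | d q.1 q.2 ≠ 0 ∧ leadRe (d q.1 q.2) θ = 0}.Countable := by
    intro q
    by_cases h0 : d q.1 q.2 = 0
    · simp [h0]
    · have hne : (d q.1 q.2).support.Nonempty := Finsupp.support_nonempty_iff.mpr h0
      refine (countable_lead_zero _ hne (hdsupp _ _)).mono ?_
      intro θ hθ; exact hθ.2
  have hBcnt : (⋃ q : Fin p × Fin p,
      {θ : ℝ | d q.1 q.2 ≠ 0 ∧ leadRe (d q.1 q.2) θ = 0}).Countable :=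
    Set.countable_iUnion hbad
  have hnot : ¬ (Set.Ioo α β ⊆ ⋃ q : Fin p × Fin p,
      {θ : ℝ | d q.1 q.2 ≠ 0 ∧ leadRe (d q.1 q.2) θ = 0}) := by
    intro hsub
    have h1 : MeasureTheory.volume (Set.Ioo α β) = 0 :=
      le_antisymm (le_trans (MeasureTheory.measure_mono hsub)
        (le_of_eq (hBcnt.measure_zero _))) zero_le
    rw [Real.volume_Ioo] at h1
    rw [ENNReal.ofReal_eq_zero] at h1
    linarith
  obtain ⟨θ₀, hθ₀mem, hθ₀bad⟩ := Set.not_subset.mp hnot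
  -- per pair, the sign is eventually constant
  have H : ∀ j k : Fin p, ∃ b : Bool, j ≠ k →
      ∀ᶠ q : ℝ × ℝ in (nhdsWithin (0 : ℝ) (Set.Ioi 0)) ×ˢ nhds θ₀,
        if b then ((χ k).eval q.1 q.2).re < ((χ j).eval q.1 q.2).re
        else ((χ j).eval q.1 q.2).re < ((χ k).eval q.1 q.2).re := by
    intro j k
    by_cases hjk : j ≠ k
    · have hg0 : d j k ≠ 0 := hdne j k hjk
      have hne : (d j k).support.Nonempty := Finsupp.support_nonempty_iff.mpr hg0
      have hlead : leadRe (d j k) θ₀ ≠ 0 := by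
        intro h0
        exact hθ₀bad (Set.mem_iUnion.mpr ⟨(j, k), ⟨hg0, h0⟩⟩)
      have hGd : ∀ s θ : ℝ, Gval (d j k) s θ = (χ j).eval s θ - (χ k).eval s θ := by
        intro s θ
        rw [Gval, hd]
        exact Finsupp.sum_sub_index (fun a b₁ b₂ => by rw [sub_mul])
      rcases lt_or_gt_of_ne hlead with hneg' | hpos'
      · refine ⟨false, fun _ => ?_⟩
        have hsupp' : (-(d j k)).support.Nonempty := by
          rw [Finsupp.support_neg]; exact hne
        have hneg'' : ∀ a ∈ (-(d j k)).support, a < 0 := by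
          rw [Finsupp.support_neg]; exact hdsupp j k
        have hlead' : 0 < leadRe (-(d j k)) θ₀ := by
          rw [leadRe_neg]; linarith
        have hev := eventually_pos_Gval _ hsupp' hneg'' θ₀ hlead'
        filter_upwards [hev] with q hq
        rw [if_neg (by simp)]
        rw [Gval_neg, Complex.neg_re, hGd, Complex.sub_re] at hq
        linarith
      · refine ⟨true, fun _ => ?_⟩
        have hev := eventually_pos_Gval _ hne (hdsupp j k) θ₀ hpos'
        filter_upwards [hev] with q hq
        rw [if_pos rfl]
        rw [hGd, Complex.sub_re] at hq
        linarith
    · exact ⟨true, fun h => absurd h hjk⟩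
  choose b hb using H
  have hball : ∀ᶠ q : ℝ × ℝ in (nhdsWithin (0 : ℝ) (Set.Ioi 0)) ×ˢ nhds θ₀,
      ∀ j k : Fin p, j ≠ k →
        if b j k then ((χ k).eval q.1 q.2).re < ((χ j).eval q.1 q.2).re
        else ((χ j).eval q.1 q.2).re < ((χ k).eval q.1 q.2).re := by
    rw [Filter.eventually_all]
    intro j
    rw [Filter.eventually_all]
    intro k
    by_cases hjk : j ≠ k
    · filter_upwards [hb j k hjk] with q hq
      exact fun _ => hq
    · exact Filter.Eventually.of_forall fun q h => absurd h hjk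
  rw [Filter.eventually_iff] at hball
  obtain ⟨T, hT, U, hU, hTU⟩ := Filter.mem_prod_iff.mp hball
  obtain ⟨R, hR, hRT⟩ := mem_nhdsGT_iff_exists_Ioo_subset.mp hT
  obtain ⟨ε, hε, hballU⟩ := Metric.mem_nhds_iff.mp hU
  have hR0 : (0 : ℝ) < R := hR
  have hθα : 0 < θ₀ - α := sub_pos.mpr hθ₀mem.1
  have hθβ : 0 < β - θ₀ := sub_pos.mpr hθ₀mem.2
  set δ : ℝ := min ε (min (θ₀ - α) (β - θ₀)) with hδdef
  have hδpos : 0 < δ := lt_min hε (lt_min hθα hθβ)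
  have hδε : δ ≤ ε := min_le_left _ _
  have hδα : δ ≤ θ₀ - α := le_trans (min_le_right _ _) (min_le_left _ _)
  have hδβ : δ ≤ β - θ₀ := le_trans (min_le_right _ _) (min_le_right _ _)
  refine ⟨min R r, θ₀ - δ / 2, θ₀ + δ / 2, lt_min hR0 hr, min_le_right _ _,
    by linarith, by linarith, by linarith, ?_⟩
  intro j k hjk
  have key : ∀ s θ : ℝ, s ∈ Set.Ioo 0 (min R r) → θ ∈ Set.Ioo (θ₀ - δ / 2) (θ₀ + δ / 2) →
      (if b j k then ((χ k).eval s θ).re < ((χ j).eval s θ).re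
       else ((χ j).eval s θ).re < ((χ k).eval s θ).re) := by
    intro s θ hs hθ
    have h1 : s ∈ Set.Ioo 0 R := ⟨hs.1, lt_of_lt_of_le hs.2 (min_le_left _ _)⟩
    have h2 : θ ∈ Metric.ball θ₀ ε := by
      rw [Metric.mem_ball, Real.dist_eq, abs_lt]
      constructor
      · linarith [hθ.1]
      · linarith [hθ.2]
    have hmem : ((s, θ) : ℝ × ℝ) ∈ T ×ˢ U :=
      Set.mem_prod.mpr ⟨hRT h1, hballU h2⟩
    exact hTU hmem j k hjk
  cases hb' : b j k
  · right
    intro s θ hs hθ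
    have := key s θ hs hθ
    rwa [hb', if_neg (by simp)] at this
  · left
    intro s θ hs hθ
    have := key s θ hs hθ
    rwa [hb', if_pos rfl] at this
end

section
/- Let l ≥ 1 and let S ⊆ ℤ^l be a nonempty set which is bounded below for the componentwise partial order (there exists m₀ ∈ ℤ^l with m₀ ≤ a componentwise for all a ∈ S) and which contains an element having at least one negative coordinate. Then there exists b ∈ ℤ^l with b_i ≥ 1 for all i such that the minimum L of {⟨a, b⟩ : a ∈ S} (standard inner product ⟨a,b⟩ = Σ_i a_i b_i) exists, satisfies L < 0, and is attained by exactly one element a₀ of S. -/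
/-- Base-`N` uniqueness: if all `|c i| < N` and `∑ c i * N^i = 0`, then `c = 0`. -/
lemma statement6_base_inj : ∀ (l : ℕ) (N : ℤ), 0 < N → ∀ (c : Fin l → ℤ),
    (∀ i, |c i| < N) → (∑ i, c i * N ^ (i : ℕ)) = 0 → ∀ i, c i = 0 := by
  intro l
  induction l with
  | zero => intro N _ c _ _ i; exact i.elim0
  | succ n ih =>
    intro N hN c hc hsum i
    rw [Fin.sum_univ_succ] at hsum
    have hpow : ∀ j : Fin n, ((j.succ : Fin (n+1)) : ℕ) = (j : ℕ) + 1 := fun j => rfl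
    have hsum' : c 0 + N * ∑ j : Fin n, c j.succ * N ^ (j : ℕ) = 0 := by
      rw [Finset.mul_sum]
      rw [show ((0 : Fin (n+1)) : ℕ) = 0 from rfl] at hsum
      simpa [hpow, pow_succ, mul_comm, mul_left_comm, mul_assoc] using hsum
    have hdvd : N ∣ c 0 := ⟨-(∑ j : Fin n, c j.succ * N ^ (j : ℕ)), by linarith⟩
    have hc0 : c 0 = 0 := Int.eq_zero_of_abs_lt_dvd hdvd (hc 0)
    have htail : ∑ j : Fin n, c j.succ * N ^ (j : ℕ) = 0 := by
      rcases mul_eq_zero.mp (by linarith : N * ∑ j : Fin n, c j.succ * N ^ (j : ℕ) = 0) with h | h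
      · exact absurd h (ne_of_gt hN)
      · exact h
    have := ih N hN (fun j => c j.succ) (fun j => hc j.succ) htail
    rcases Fin.eq_zero_or_eq_succ i with h | ⟨j, rfl⟩
    · rw [h]; exact hc0
    · exact this j

/-- Weight-vector lemma: if `S ⊆ ℤ^l` is nonempty, bounded below for the
componentwise partial order, and contains an element with a negative
coordinate, then there is a weight vector `b` with all `b_i ≥ 1` such that
the minimum `L` of `{⟨a, b⟩ : a ∈ S}` exists, is negative, and is attained
by exactly one element of `S`. -/
theorem statement6 (l : ℕ) (hl : 1 ≤ l) (S : Set (Fin l → ℤ)) (hne : S.Nonempty)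
    (hbdd : ∃ m₀ : Fin l → ℤ, ∀ a ∈ S, m₀ ≤ a)
    (hneg : ∃ a ∈ S, ∃ i : Fin l, a i < 0) :
    ∃ b : Fin l → ℤ, (∀ i : Fin l, 1 ≤ b i) ∧
      ∃ L : ℤ, IsLeast ((fun a : Fin l → ℤ => ∑ i, a i * b i) '' S) L ∧ L < 0 ∧
        ∃! a₀ : Fin l → ℤ, a₀ ∈ S ∧ ∑ i, a₀ i * b i = L := by
  obtain ⟨m₀, hm₀⟩ := hbdd
  obtain ⟨astar, hastarS, istar, hineg⟩ := hneg
  -- heavy weight on the negative coordinate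
  set T : ℤ := 1 + ∑ j, max 0 (astar j) with hT
  have hT1 : 1 ≤ T := by
    have : 0 ≤ ∑ j, max 0 (astar j) :=
      Finset.sum_nonneg fun j _ => le_max_left _ _
    omega
  set w : Fin l → ℤ := fun j => if j = istar then T else 1 with hw
  have hw1 : ∀ j, 1 ≤ w j := by
    intro j; simp only [hw]; split <;> omega
  -- lower bound for weighted sums over S
  have key : ∀ (v : Fin l → ℤ), (∀ j, 1 ≤ v j) → ∀ a ∈ S,
      (∑ j, m₀ j * v j) ≤ ∑ j, a j * v j := by
    intro v hv a ha
    refine Finset.sum_le_sum fun j _ => ?_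
    exact mul_le_mul_of_nonneg_right (hm₀ a ha j) (by linarith [hv j])
  -- the weighted value of astar is negative
  have hastarw : ∑ j, astar j * w j ≤ -1 := by
    rw [← Finset.add_sum_erase _ _ (Finset.mem_univ istar)]
    have h1 : astar istar * w istar ≤ -T := by
      have : w istar = T := by simp [hw]
      rw [this]
      nlinarith
    have h2 : ∑ j ∈ Finset.univ.erase istar, astar j * w j ≤ T - 1 := by
      have e1 : ∀ j ∈ Finset.univ.erase istar, astar j * w j ≤ max 0 (astar j) := by
        intro j hj
        have hj' : j ≠ istar := (Finset.mem_erase.mp hj).1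
        simp only [hw, if_neg hj', mul_one]
        exact le_max_right _ _
      calc ∑ j ∈ Finset.univ.erase istar, astar j * w j
          ≤ ∑ j ∈ Finset.univ.erase istar, max 0 (astar j) := Finset.sum_le_sum e1
        _ ≤ ∑ j, max 0 (astar j) :=
            Finset.sum_le_sum_of_subset_of_nonneg (Finset.erase_subset _ _)
              (fun j _ _ => le_max_left _ _)
        _ = T - 1 := by omega
    linarith
  -- first minimum L₀
  obtain ⟨L₀, ⟨a₁, ha₁S, ha₁⟩, hL₀min⟩ :=
    Int.exists_least_of_bdd (P := fun z => ∃ a ∈ S, ∑ j, a j * w j = z)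
      ⟨∑ j, m₀ j * w j, by rintro z ⟨a, ha, rfl⟩; exact key w hw1 a ha⟩
      ⟨_, astar, hastarS, rfl⟩
  have hL₀neg : L₀ < 0 := by
    have := hL₀min _ ⟨astar, hastarS, rfl⟩
    linarith
  -- box bound for minimizers of w
  set U : Fin l → ℤ := fun i => max 0 (L₀ - (∑ j, m₀ j * w j) + m₀ i * w i) with hU
  have hbox : ∀ a ∈ S, (∑ j, a j * w j = L₀) → ∀ i, a i ≤ U i := by
    intro a ha haw i
    rcases le_or_gt (a i) 0 with h | h
    · exact h.trans (le_max_left _ _)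
    · have h1 : a i * w i + ∑ j ∈ Finset.univ.erase i, a j * w j = L₀ := by
        rw [← haw, Finset.add_sum_erase _ (fun j => a j * w j) (Finset.mem_univ i)]
      have h2 : m₀ i * w i + ∑ j ∈ Finset.univ.erase i, m₀ j * w j = ∑ j, m₀ j * w j :=
        Finset.add_sum_erase _ (fun j => m₀ j * w j) (Finset.mem_univ i)
      have h3 : ∑ j ∈ Finset.univ.erase i, m₀ j * w j ≤
          ∑ j ∈ Finset.univ.erase i, a j * w j := by
        refine Finset.sum_le_sum fun j _ => ?_
        exact mul_le_mul_of_nonneg_right (hm₀ a ha j) (by linarith [hw1 j])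
      have h4 : a i ≤ a i * w i := le_mul_of_one_le_right (by linarith) (hw1 i)
      have : a i ≤ L₀ - (∑ j, m₀ j * w j) + m₀ i * w i := by linarith
      exact this.trans (le_max_right _ _)
  -- base N for tie-breaking
  set N : ℤ := 1 + ∑ i, max 0 (U i - m₀ i) with hN
  have hNpos : 0 < N := by
    have : 0 ≤ ∑ i, max 0 (U i - m₀ i) :=
      Finset.sum_nonneg fun i _ => le_max_left _ _
    omega
  have hNbig : ∀ i, U i - m₀ i < N := by
    intro i
    have h1 : max 0 (U i - m₀ i) ≤ ∑ j, max 0 (U j - m₀ j) :=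
      Finset.single_le_sum (f := fun j => max 0 (U j - m₀ j))
        (fun j _ => le_max_left _ _) (Finset.mem_univ i)
    have := le_max_right 0 (U i - m₀ i)
    omega
  set e : Fin l → ℤ := fun i => N ^ (i : ℕ) with he
  have he1 : ∀ i, 1 ≤ e i := fun i => one_le_pow₀ (by omega : (1:ℤ) ≤ N)
  -- second minimum L₁ among w-minimizers
  obtain ⟨L₁, ⟨a₀, ⟨ha₀S, ha₀w⟩, ha₀e⟩, hL₁min⟩ :=
    Int.exists_least_of_bdd
      (P := fun z => ∃ a, (a ∈ S ∧ ∑ j, a j * w j = L₀) ∧ ∑ j, a j * e j = z)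
      ⟨∑ j, m₀ j * e j, by rintro z ⟨a, ⟨ha, -⟩, rfl⟩; exact key e he1 a ha⟩
      ⟨_, a₁, ⟨ha₁S, ha₁⟩, rfl⟩
  -- uniqueness of the e-minimizer among w-minimizers
  have huniq : ∀ a ∈ S, ∑ j, a j * w j = L₀ → ∑ j, a j * e j = L₁ → a = a₀ := by
    intro a ha haw hae
    have habs : ∀ i, |a i - a₀ i| < N := by
      intro i
      have h1 : a i ≤ U i := hbox a ha haw i
      have h2 : a₀ i ≤ U i := hbox a₀ ha₀S ha₀w i
      have h3 : m₀ i ≤ a i := hm₀ a ha i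
      have h4 : m₀ i ≤ a₀ i := hm₀ a₀ ha₀S i
      have h5 : U i - m₀ i < N := hNbig i
      rw [abs_lt]; constructor <;> omega
    have hsum : ∑ i, (a i - a₀ i) * N ^ (i : ℕ) = 0 := by
      have : ∑ i, (a i - a₀ i) * e i = 0 := by
        simp only [sub_mul, Finset.sum_sub_distrib, hae, ha₀e, sub_self]
      simpa [he] using this
    have hz := statement6_base_inj l N hNpos (fun i => a i - a₀ i) habs hsum
    funext i
    have hzi : a i - a₀ i = 0 := hz i
    omega
  set E₀ : ℤ := ∑ j, m₀ j * e j with hE₀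
  have hL₁ge : E₀ ≤ L₁ := ha₀e ▸ key e he1 a₀ ha₀S
  set t : ℤ := max (L₁ - E₀) (max L₁ 1) + 1 with ht
  have ht2 : 1 ≤ t := by
    have := le_max_right L₁ 1
    have := le_max_right (L₁ - E₀) (max L₁ 1)
    omega
  have htL₁ : L₁ < t := by
    have h1 := le_max_left L₁ 1
    have h2 := le_max_right (L₁ - E₀) (max L₁ 1)
    omega
  have htE : L₁ - E₀ < t := by
    have := le_max_left (L₁ - E₀) (max L₁ 1)
    omega
  set b : Fin l → ℤ := fun j => t * w j + e j with hb
  have hb1 : ∀ j, 1 ≤ b j := by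
    intro j
    have := hw1 j; have := he1 j
    simp only [hb]; nlinarith
  have hsplit : ∀ a : Fin l → ℤ, ∑ j, a j * b j = t * (∑ j, a j * w j) + ∑ j, a j * e j := by
    intro a
    rw [Finset.mul_sum, ← Finset.sum_add_distrib]
    refine Finset.sum_congr rfl fun j _ => ?_
    simp only [hb]; ring
  set L : ℤ := t * L₀ + L₁ with hL
  have hlb : ∀ a ∈ S, L ≤ ∑ j, a j * b j := by
    intro a ha
    rw [hsplit a]
    rcases eq_or_lt_of_le (hL₀min _ ⟨a, ha, rfl⟩) with heq | hlt
    · have := hL₁min _ ⟨a, ⟨ha, heq.symm⟩, rfl⟩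
      nlinarith
    · have h1 : L₀ + 1 ≤ ∑ j, a j * w j := hlt
      have h2 : E₀ ≤ ∑ j, a j * e j := key e he1 a ha
      nlinarith
  refine ⟨b, hb1, L, ⟨⟨a₀, ha₀S, by show ∑ j, a₀ j * b j = L; rw [hsplit a₀, ha₀w, ha₀e]⟩,
    by rintro y ⟨a, ha, rfl⟩; exact hlb a ha⟩, ?_, ?_⟩
  · nlinarith
  · refine ⟨a₀, ⟨ha₀S, by rw [hsplit a₀, ha₀w, ha₀e]⟩, ?_⟩
    rintro a ⟨ha, hav⟩
    rw [hsplit a] at hav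
    have hwge := hL₀min _ ⟨a, ha, rfl⟩
    rcases eq_or_lt_of_le hwge with heq | hlt
    · have heL : ∑ j, a j * e j = L₁ := by
        rw [← heq] at hav
        simp only [hL] at hav
        omega
      exact huniq a ha heq.symm heL
    · exfalso
      have h1 : L₀ + 1 ≤ ∑ j, a j * w j := hlt
      have h2 : E₀ ≤ ∑ j, a j * e j := key e he1 a ha
      nlinarith
end

section
/- Let l ≥ 1, r > 0, m₀ ∈ ℤ^l, and let g(u) = Σ_{a ∈ ℤ^l, a ≥ m₀} c_a u^a (componentwise order, c_a ∈ ℂ) be a Laurent series converging absolutely at every point of {u ∈ ℂ^l : 0 < |u_i| < r for all i}. Let b ∈ ℤ^l with b_i ≥ 1 for all i, and suppose the minimum L of {⟨a, b⟩ : c_a ≠ 0} exists, satisfies L < 0, and is attained at a unique a₀. Then for every θ ∈ ℝ^l with Re(c_{a₀}·e^{i⟨a₀, θ⟩}) ≠ 0, the function s ↦ Re g(s^{b₁} e^{iθ₁}, …, s^{b_l} e^{iθ_l}), defined for small s > 0, tends to +∞ or to −∞ as s → 0+. -/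
open Filter Topology

lemma aux_prod_zpow {M : Type*} [CommGroupWithZero M] {ι : Type*}
    (t : Finset ι) {x : M} (hx : x ≠ 0) (f : ι → ℤ) :
    ∏ i ∈ t, x ^ f i = x ^ ∑ i ∈ t, f i := by
  induction t using Finset.cons_induction with
  | empty => simp
  | cons a t ha ih => rw [Finset.prod_cons, Finset.sum_cons, ih, zpow_add₀ hx]

lemma aux_abs_factor (n : ℤ) (t : ℝ) {s : ℝ} (hs : 0 < s) :
    ‖((s : ℂ) ^ n) * Complex.exp ((t : ℂ) * Complex.I)‖ = s ^ n := by
  rw [norm_mul, norm_zpow, Complex.norm_exp]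
  simp [abs_of_pos hs]

lemma aux_term_eq {l : ℕ} (b : Fin l → ℤ) (θ : Fin l → ℝ) {s : ℝ} (hs : 0 < s)
    (a : Fin l → ℤ) (c : ℂ) :
    c * ∏ i, (((s : ℂ) ^ (b i)) * Complex.exp ((θ i : ℂ) * Complex.I)) ^ (a i)
      = (c * Complex.exp ((∑ i, (a i : ℝ) * θ i : ℝ) * Complex.I)) * (s : ℂ) ^ (∑ i, a i * b i) := by
  have hs0 : (s : ℂ) ≠ 0 := by exact_mod_cast hs.ne'
  have h1 : ∀ i : Fin l, (((s : ℂ) ^ (b i)) * Complex.exp ((θ i : ℂ) * Complex.I)) ^ (a i)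
      = (s : ℂ) ^ (a i * b i) * Complex.exp ((a i : ℂ) * ((θ i : ℂ) * Complex.I)) := by
    intro i
    rw [mul_zpow, ← Complex.exp_int_mul, mul_comm (a i) (b i), zpow_mul]
  rw [Finset.prod_congr rfl (fun i _ => h1 i), Finset.prod_mul_distrib,
    aux_prod_zpow _ hs0, ← Complex.exp_sum]
  have : ((∑ i, (a i : ℝ) * θ i : ℝ) : ℂ) * Complex.I = ∑ i, (a i : ℂ) * ((θ i : ℂ) * Complex.I) := by
    push_cast
    rw [Finset.sum_mul]
    exact Finset.sum_congr rfl fun i _ => by ring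
  rw [this]
  ring

lemma aux_abs_prod {l : ℕ} (b : Fin l → ℤ) (θ : Fin l → ℝ) {s : ℝ} (hs : 0 < s)
    (a : Fin l → ℤ) :
    ∏ i, ‖((s : ℂ) ^ (b i)) * Complex.exp ((θ i : ℂ) * Complex.I)‖ ^ (a i)
      = s ^ (∑ i, a i * b i) := by
  calc ∏ i, ‖((s : ℂ) ^ (b i)) * Complex.exp ((θ i : ℂ) * Complex.I)‖ ^ (a i)
      = ∏ i, (s ^ (b i * a i)) := by
        refine Finset.prod_congr rfl fun i _ => ?_
        rw [aux_abs_factor _ _ hs, ← zpow_mul]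
    _ = s ^ (∑ i, b i * a i) := aux_prod_zpow _ hs.ne' _
    _ = s ^ (∑ i, a i * b i) := by
        congr 1
        exact Finset.sum_congr rfl fun i _ => mul_comm _ _

lemma aux_norm_term {l : ℕ} (θ : Fin l → ℝ) {s : ℝ} (hs : 0 < s) (a : Fin l → ℤ)
    (c : ℂ) (n : ℤ) :
    ‖(c * Complex.exp ((∑ i, (a i : ℝ) * θ i : ℝ) * Complex.I)) * (s : ℂ) ^ n‖
      = ‖c‖ * s ^ n := by
  rw [norm_mul, norm_mul, norm_zpow, Complex.norm_exp]
  simp [abs_of_pos hs]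

/-- Let `g(u) = Σ_{a ≥ m₀} c_a u^a` be a Laurent series in `l` variables
(componentwise order on `ℤ^l`) converging absolutely on the punctured polydisk
`{0 < |u_i| < r}`.  If for some weight vector `b` with all `b_i ≥ 1` the
minimum `L` of `{⟨a, b⟩ : c_a ≠ 0}` exists, is negative and is attained at a
unique `a₀`, then for every direction `θ ∈ ℝ^l` with
`Re (c_{a₀}·e^{i⟨a₀,θ⟩}) ≠ 0`, the function
`s ↦ Re g(s^{b₁}e^{iθ₁}, …, s^{b_l}e^{iθ_l})` tends to `+∞` or `−∞`
as `s → 0⁺`. -/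
theorem statement7 (l : ℕ) (hl : 1 ≤ l) (r : ℝ) (hr : 0 < r)
    (m₀ : Fin l → ℤ) (c : (Fin l → ℤ) → ℂ)
    (hsupp : ∀ a : Fin l → ℤ, c a ≠ 0 → m₀ ≤ a)
    (hconv : ∀ u : Fin l → ℂ,
      (∀ i, 0 < ‖u i‖ ∧ ‖u i‖ < r) →
      Summable (fun a : Fin l → ℤ =>
        ‖c a‖ * ∏ i, ‖u i‖ ^ (a i)))
    (b : Fin l → ℤ) (hb : ∀ i, 1 ≤ b i)
    (L : ℤ) (hL : IsLeast {n : ℤ | ∃ a : Fin l → ℤ, c a ≠ 0 ∧ ∑ i, a i * b i = n} L)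
    (hLneg : L < 0)
    (a₀ : Fin l → ℤ) (ha₀ : c a₀ ≠ 0) (ha₀L : ∑ i, a₀ i * b i = L)
    (huniq : ∀ a : Fin l → ℤ, c a ≠ 0 → ∑ i, a i * b i = L → a = a₀)
    (θ : Fin l → ℝ)
    (hθ : (c a₀ * Complex.exp ((∑ i, (a₀ i : ℝ) * θ i : ℝ) * Complex.I)).re ≠ 0) :
    Tendsto
      (fun s : ℝ => (∑' a : Fin l → ℤ,
        c a * ∏ i, (((s : ℂ) ^ (b i)) * Complex.exp ((θ i : ℂ) * Complex.I)) ^ (a i)).re)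
      (nhdsWithin 0 (Set.Ioi 0)) atTop ∨
    Tendsto
      (fun s : ℝ => (∑' a : Fin l → ℤ,
        c a * ∏ i, (((s : ℂ) ^ (b i)) * Complex.exp ((θ i : ℂ) * Complex.I)) ^ (a i)).re)
      (nhdsWithin 0 (Set.Ioi 0)) atBot := by
  classical
  set F : ℝ → ℂ := fun s => ∑' a : Fin l → ℤ,
      c a * ∏ i, (((s : ℂ) ^ (b i)) * Complex.exp ((θ i : ℂ) * Complex.I)) ^ (a i) with hF
  set c' : (Fin l → ℤ) → ℂ := fun a =>
      c a * Complex.exp ((∑ i, (a i : ℝ) * θ i : ℝ) * Complex.I) with hc'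
  set T : ℝ → ℂ := fun s => ∑' a : Fin l → ℤ,
      if a = a₀ then 0 else c' a * (s : ℂ) ^ (∑ i, a i * b i) with hT
  obtain ⟨s₀, hs₀pos, hs₀lt1, hs₀ltr⟩ : ∃ s₀ : ℝ, 0 < s₀ ∧ s₀ < 1 ∧ s₀ < r := by
    refine ⟨min 1 r / 2, ?_, ?_, ?_⟩
    · have : (0:ℝ) < min 1 r := lt_min one_pos hr
      positivity
    · have : min 1 r ≤ 1 := min_le_left _ _
      linarith
    · have : min 1 r ≤ r := min_le_right _ _
      linarith
  -- summability of the absolute series at small s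
  have hsum : ∀ {s : ℝ}, 0 < s → s ≤ s₀ →
      Summable (fun a : Fin l → ℤ => ‖c a‖ * s ^ (∑ i, a i * b i)) := by
    intro s hs hss
    have hcond : ∀ i, 0 < ‖((s : ℂ) ^ (b i)) * Complex.exp ((θ i : ℂ) * Complex.I)‖ ∧
        ‖((s : ℂ) ^ (b i)) * Complex.exp ((θ i : ℂ) * Complex.I)‖ < r := by
      intro i
      rw [aux_abs_factor _ _ hs]
      refine ⟨zpow_pos hs _, ?_⟩
      have hs1 : s < 1 := lt_of_le_of_lt hss hs₀lt1
      have h1 : s ^ (b i) ≤ s ^ (1 : ℤ) :=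
        zpow_le_zpow_right_of_le_one₀ hs hs1.le (hb i)
      rw [zpow_one] at h1
      exact lt_of_le_of_lt h1 (lt_of_le_of_lt hss hs₀ltr)
    have := hconv _ hcond
    exact this.congr fun a => by rw [aux_abs_prod b θ hs a]
  -- summability of the complex series
  have hsumC : ∀ {s : ℝ}, 0 < s → s ≤ s₀ →
      Summable (fun a : Fin l → ℤ => c' a * (s : ℂ) ^ (∑ i, a i * b i)) := by
    intro s hs hss
    refine Summable.of_norm ?_
    exact (hsum hs hss).congr fun a => (aux_norm_term θ hs a (c a) _).symm
  -- decomposition of F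
  have hdecomp : ∀ {s : ℝ}, 0 < s → s ≤ s₀ →
      F s = c' a₀ * (s : ℂ) ^ L + T s := by
    intro s hs hss
    have h1 : F s = ∑' a : Fin l → ℤ, c' a * (s : ℂ) ^ (∑ i, a i * b i) :=
      tsum_congr fun a => aux_term_eq b θ hs a (c a)
    rw [h1, Summable.tsum_eq_add_tsum_ite (hsumC hs hss) a₀, ha₀L]
  -- M : total mass at s₀
  set M : ℝ := ∑' a : Fin l → ℤ, ‖c a‖ * s₀ ^ (∑ i, a i * b i) with hM
  -- key termwise bound for the tail
  have hkey : ∀ {s : ℝ}, 0 < s → s ≤ s₀ → ∀ a : Fin l → ℤ,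
      ‖(if a = a₀ then 0 else c' a * (s : ℂ) ^ (∑ i, a i * b i))‖
        ≤ (‖c a‖ * s₀ ^ (∑ i, a i * b i)) * (s / s₀) ^ (L + 1) := by
    intro s hs hss a
    have hds : 0 < s / s₀ := div_pos hs hs₀pos
    have hds1 : s / s₀ ≤ 1 := (div_le_one hs₀pos).2 hss
    by_cases ha : a = a₀
    · rw [if_pos ha, norm_zero]
      exact mul_nonneg (mul_nonneg (norm_nonneg _) (zpow_nonneg hs₀pos.le _))
        (zpow_pos hds _).le
    · rw [if_neg ha]
      by_cases hca : c a = 0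
      · rw [hc']
        simp only [hca, zero_mul, norm_zero]
        exact le_refl (0:ℝ)
      · have hge : L + 1 ≤ ∑ i, a i * b i := by
          have hmem : (∑ i, a i * b i) ∈ {n : ℤ | ∃ a : Fin l → ℤ, c a ≠ 0 ∧ ∑ i, a i * b i = n} :=
            ⟨a, hca, rfl⟩
          have h1 := hL.2 hmem
          rcases lt_or_eq_of_le h1 with h2 | h2
          · omega
          · exact absurd (huniq a hca h2.symm) ha
        rw [aux_norm_term θ hs a (c a)]
        have e1 : s ^ (∑ i, a i * b i) = s₀ ^ (∑ i, a i * b i) * (s / s₀) ^ (∑ i, a i * b i) := by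
          rw [div_zpow, mul_div_assoc']
          rw [mul_comm, mul_div_assoc, div_self (zpow_ne_zero _ hs₀pos.ne'), mul_one]
        rw [e1, ← mul_assoc]
        refine mul_le_mul_of_nonneg_left ?_ (by positivity)
        exact zpow_le_zpow_right_of_le_one₀ hds hds1 hge
  -- tail estimate
  have htail : ∀ {s : ℝ}, 0 < s → s ≤ s₀ → ‖T s‖ ≤ M * (s / s₀) ^ (L + 1) := by
    intro s hs hss
    have hsum₀ : Summable (fun a : Fin l → ℤ =>
        (‖c a‖ * s₀ ^ (∑ i, a i * b i)) * (s / s₀) ^ (L + 1)) :=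
      (hsum hs₀pos le_rfl).mul_right _
    have hsumN : Summable (fun a : Fin l → ℤ =>
        ‖(if a = a₀ then 0 else c' a * (s : ℂ) ^ (∑ i, a i * b i))‖) :=
      Summable.of_nonneg_of_le (fun a => norm_nonneg _) (hkey hs hss) hsum₀
    calc ‖T s‖ ≤ ∑' a : Fin l → ℤ,
          ‖(if a = a₀ then 0 else c' a * (s : ℂ) ^ (∑ i, a i * b i))‖ :=
        norm_tsum_le_tsum_norm hsumN
      _ ≤ ∑' a : Fin l → ℤ,
          (‖c a‖ * s₀ ^ (∑ i, a i * b i)) * (s / s₀) ^ (L + 1) :=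
        Summable.tsum_le_tsum (hkey hs hss) hsumN hsum₀
      _ = M * (s / s₀) ^ (L + 1) := by rw [hM, tsum_mul_right]
  -- eventually facts
  have hev : ∀ᶠ s in nhdsWithin (0:ℝ) (Set.Ioi 0), 0 < s ∧ s < s₀ := by
    have h1 : Set.Ioo (0:ℝ) s₀ ∈ nhdsWithin (0:ℝ) (Set.Ioi 0) :=
      Ioo_mem_nhdsGT_of_mem ⟨le_refl 0, hs₀pos⟩
    filter_upwards [h1] with s hs
    exact ⟨hs.1, hs.2⟩
  -- the renormalized limit
  have hlim : Tendsto (fun s : ℝ => s ^ (-L) * (F s).re) (nhdsWithin 0 (Set.Ioi 0))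
      (𝓝 ((c' a₀).re)) := by
    have hzero : Tendsto (fun s : ℝ => s ^ (-L) * (T s).re) (nhdsWithin 0 (Set.Ioi 0)) (𝓝 0) := by
      refine squeeze_zero_norm' (a := fun s => M * (s₀ ^ (L + 1))⁻¹ * s) ?_ ?_
      · filter_upwards [hev] with s hs
        obtain ⟨hs0, hss⟩ := hs
        have h1 : ‖s ^ (-L) * (T s).re‖ ≤ s ^ (-L) * ‖T s‖ := by
          rw [norm_mul, Real.norm_eq_abs, abs_of_pos (zpow_pos hs0 _), Real.norm_eq_abs]
          exact mul_le_mul_of_nonneg_left (Complex.abs_re_le_norm _) (zpow_pos hs0 _).le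
        refine h1.trans ?_
        have h2 : s ^ (-L) * ‖T s‖ ≤ s ^ (-L) * (M * (s / s₀) ^ (L + 1)) :=
          mul_le_mul_of_nonneg_left (htail hs0 hss.le) (zpow_pos hs0 _).le
        refine h2.trans_eq ?_
        have h3 : s ^ (-L) * s ^ (L + 1) = s := by
          rw [← zpow_add₀ hs0.ne']
          norm_num
        calc s ^ (-L) * (M * (s / s₀) ^ (L + 1))
            = M * (s₀ ^ (L + 1))⁻¹ * (s ^ (-L) * s ^ (L + 1)) := by
              rw [div_zpow]; ring
          _ = M * (s₀ ^ (L + 1))⁻¹ * s := by rw [h3]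
      · have hcont : Tendsto (fun s : ℝ => M * (s₀ ^ (L + 1))⁻¹ * s) (𝓝 0)
            (𝓝 (M * (s₀ ^ (L + 1))⁻¹ * 0)) :=
          (continuous_const.mul continuous_id).tendsto 0
        rw [mul_zero] at hcont
        exact hcont.mono_left nhdsWithin_le_nhds
    have heq : ∀ᶠ s in nhdsWithin (0:ℝ) (Set.Ioi 0),
        (c' a₀).re + s ^ (-L) * (T s).re = s ^ (-L) * (F s).re := by
      filter_upwards [hev] with s hs
      obtain ⟨hs0, hss⟩ := hs
      rw [hdecomp hs0 hss.le]
      have h4 : (c' a₀ * (s : ℂ) ^ L + T s).re = (c' a₀).re * s ^ L + (T s).re := by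
        rw [Complex.add_re, ← Complex.ofReal_zpow, Complex.mul_re, Complex.ofReal_re,
          Complex.ofReal_im, mul_zero, sub_zero]
      rw [h4, mul_add]
      have h5 : s ^ (-L) * ((c' a₀).re * s ^ L) = (c' a₀).re := by
        have h6 : s ^ (-L) * s ^ L = 1 := by
          rw [← zpow_add₀ hs0.ne']; norm_num
        calc s ^ (-L) * ((c' a₀).re * s ^ L) = (c' a₀).re * (s ^ (-L) * s ^ L) := by ring
          _ = (c' a₀).re := by rw [h6, mul_one]
      rw [h5]
    have := (tendsto_const_nhds.add hzero : Tendsto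
        (fun s : ℝ => (c' a₀).re + s ^ (-L) * (T s).re) (nhdsWithin 0 (Set.Ioi 0))
        (𝓝 ((c' a₀).re + 0)))
    rw [add_zero] at this
    exact this.congr' heq
  -- s ^ L → atTop
  have hpow : Tendsto (fun s : ℝ => s ^ L) (nhdsWithin 0 (Set.Ioi 0)) atTop := by
    have hn : (-L).toNat ≠ 0 := by omega
    have h1 : Tendsto (fun s : ℝ => (s⁻¹) ^ (-L).toNat) (nhdsWithin 0 (Set.Ioi 0)) atTop :=
      (tendsto_pow_atTop hn).comp tendsto_inv_nhdsGT_zero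
    refine h1.congr' ?_
    filter_upwards [self_mem_nhdsWithin] with s hs
    have hs0 : (0:ℝ) < s := hs
    rw [← zpow_natCast (s⁻¹) ((-L).toNat), inv_zpow, ← zpow_neg]
    congr 1
    omega
  -- finishing: F s .re = s^L * (s^(-L) * (F s).re)
  have hprod : ∀ᶠ s in nhdsWithin (0:ℝ) (Set.Ioi 0),
      s ^ L * (s ^ (-L) * (F s).re) = (F s).re := by
    filter_upwards [self_mem_nhdsWithin] with s hs
    have hs0 : (0:ℝ) < s := hs
    have h6 : s ^ L * s ^ (-L) = 1 := by
      rw [← zpow_add₀ hs0.ne']; norm_num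
    calc s ^ L * (s ^ (-L) * (F s).re) = (s ^ L * s ^ (-L)) * (F s).re := by ring
      _ = (F s).re := by rw [h6, one_mul]
  rcases hθ.lt_or_gt with hneg | hpos
  · right
    exact (hpow.atTop_mul_neg hneg hlim).congr' hprod
  · left
    exact (hpow.atTop_mul_pos hpos hlim).congr' hprod
end

section
/- Let r > 0, k ≥ 1 an integer, and let φ be a holomorphic function on the punctured disk {u ∈ ℂ : 0 < |u| < r} such that u^k·φ(u) extends to a holomorphic function h on {|u| < r} with h(0) ≠ 0 (i.e., φ has a pole of order exactly k at 0). Then there exist ε ∈ (0, r] and a₀ > 0 such that for every real a ≥ a₀, the set {u ∈ ℂ : 0 < |u| < ε, Re φ(u) ≥ a} has exactly k connected components. -/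
open Complex Set Metric Real

noncomputable section Statement8Aux

/-- real part of `((ρ e^{iθ})^k)⁻¹`. -/
lemma s8_re_aux (ρ θ : ℝ) (k : ℕ) :
    ((((ρ:ℂ) * Complex.exp (θ * Complex.I)) ^ k)⁻¹).re = (ρ ^ k)⁻¹ * Real.cos (k * θ) := by
  have h1 : ((ρ:ℂ) * Complex.exp (θ * Complex.I)) ^ k
      = (ρ:ℂ) ^ k * Complex.exp ((k * θ) * Complex.I) := by
    rw [mul_pow, ← Complex.exp_nat_mul]; ring_nf
  rw [h1, mul_inv, ← Complex.exp_neg]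
  have h2 : -((k:ℂ) * (θ:ℂ) * Complex.I) = (((-(k*θ) : ℝ)) : ℂ) * Complex.I := by push_cast; ring
  have h3 : (((ρ:ℂ))^k)⁻¹ = ((((ρ^k)⁻¹ : ℝ)):ℂ) := by norm_cast
  rw [h2, h3, Complex.re_ofReal_mul, Complex.exp_ofReal_mul_I_re, Real.cos_neg]

lemma s8_cos_pos_exists {x : ℝ} (hx : 0 < Real.cos x) : ∃ m : ℤ, |x - 2*π*m| < π/2 := by
  refine ⟨round (x / (2*π)), ?_⟩
  set m : ℤ := round (x / (2*π))
  have h2π : (0:ℝ) < 2*π := by positivity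
  have h1 : |x / (2*π) - m| ≤ 1/2 := abs_sub_round _
  have hy : |x - 2*π*m| ≤ π := by
    have h2 := mul_le_mul_of_nonneg_left h1 h2π.le
    calc |x - 2*π*m| = |2*π| * |x/(2*π) - m| := by
          rw [← abs_mul]; congr 1; field_simp
      _ = 2*π * |x/(2*π) - m| := by rw [abs_of_pos h2π]
      _ ≤ 2*π*(1/2) := h2
      _ = π := by ring
  by_contra hcon
  push_neg at hcon
  have hcos : Real.cos (x - 2*π*m) = Real.cos x := by
    have := Real.cos_add_int_mul_two_pi x (-m)
    simpa [sub_eq_add_neg, mul_comm] using this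
  have : Real.cos |x - 2*π*m| ≤ 0 := by
    apply Real.cos_nonpos_of_pi_div_two_le_of_le hcon
    linarith
  rw [Real.cos_abs, hcos] at this
  linarith

noncomputable section

lemma s8_arg_aux {ρ η : ℝ} (hρ : 0 < ρ) (hη : |η| < π) :
    Complex.arg ((ρ:ℂ) * Complex.exp (η * Complex.I)) = η := by
  rw [Complex.exp_mul_I]
  exact Complex.arg_mul_cos_add_sin_mul_I hρ
    ⟨by cases abs_lt.mp hη; linarith, by cases abs_lt.mp hη; linarith⟩

/-- the open sector of half-width π/k around direction `2πj/k`, as membership after rotation. -/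
def s8Slit (k : ℕ) : Set ℂ := {z : ℂ | z ≠ 0 ∧ |Complex.arg z| < π / k}

def s8rot (k : ℕ) (j : ℕ) : ℂ := Complex.exp (-(2 * π * j / k : ℝ) * Complex.I)

lemma s8rot_ne (k j : ℕ) : s8rot k j ≠ 0 := Complex.exp_ne_zero _

lemma s8_isOpen_slit {k : ℕ} (hk : 1 ≤ k) : IsOpen (s8Slit k) := by
  rw [isOpen_iff_mem_nhds]
  rintro z ⟨hz0, hzarg⟩
  have hπk : π / k ≤ π := by
    have hπ := Real.pi_pos
    have h1 : (1:ℝ) ≤ k := by exact_mod_cast hk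
    rw [div_le_iff₀ (by linarith)]
    nlinarith
  have hsp : z ∈ Complex.slitPlane := by
    refine Complex.mem_slitPlane_iff_arg.mpr ⟨?_, hz0⟩
    intro hargpi
    rw [hargpi] at hzarg
    have := abs_lt.mp hzarg
    linarith [Real.pi_pos, this.2]
  have hc : ContinuousAt (fun w => |Complex.arg w|) z :=
    (Complex.continuousAt_arg hsp).abs
  have h1 : {w : ℂ | |Complex.arg w| < π / k} ∈ nhds z :=
    hc.preimage_mem_nhds (Iio_mem_nhds hzarg)
  have h2 : {w : ℂ | w ≠ 0} ∈ nhds z := by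
    exact IsOpen.mem_nhds isOpen_ne hz0
  filter_upwards [h1, h2] with w hw1 hw2
  exact ⟨hw2, hw1⟩

end

noncomputable section

lemma s8_rot_mul (k : ℕ) (j : ℕ) (w : ℂ) (β : ℝ) (hβ : β = 2 * π * j / k) :
    s8rot k j * w = (‖w‖ : ℂ) * Complex.exp ((Complex.arg w - β : ℝ) * Complex.I) := by
  conv_lhs => rw [← Complex.norm_mul_exp_arg_mul_I w]
  rw [s8rot, hβ]
  rw [show ((Complex.arg w - 2*π*j/k : ℝ) : ℂ) * Complex.I
      = (-(2*π*j/k : ℝ) : ℂ) * Complex.I + (Complex.arg w : ℝ) * Complex.I by push_cast; ring,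
    Complex.exp_add]
  ring

lemma s8_exp_shift (x : ℝ) (n : ℤ) :
    Complex.exp ((x + 2 * π * n : ℝ) * Complex.I) = Complex.exp ((x:ℝ) * Complex.I) := by
  rw [show ((x + 2*π*n : ℝ) : ℂ) * Complex.I = (x:ℝ) * Complex.I + n * (2 * π * Complex.I) by
    push_cast; ring, Complex.exp_add, Complex.exp_int_mul_two_pi_mul_I, mul_one]

lemma s8_cover {k : ℕ} (hk : 1 ≤ k) {w : ℂ} (hw : w ≠ 0)
    (hcos : 0 < Real.cos (k * Complex.arg w)) :
    ∃ j : Fin k, s8rot k j * w ∈ s8Slit k := by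
  obtain ⟨m, hm⟩ := s8_cos_pos_exists hcos
  have hk0 : (0:ℤ) < k := by exact_mod_cast hk
  have hkR : (0:ℝ) < k := by exact_mod_cast hk
  set j0 : ℤ := m % k with hj0def
  have hj0 : 0 ≤ j0 := Int.emod_nonneg m (by exact_mod_cast hk0.ne')
  have hj0k : j0 < k := Int.emod_lt_of_pos m hk0
  refine ⟨⟨j0.toNat, by omega⟩, ?_⟩
  set n : ℤ := m / k with hndef
  have hmnk : (k:ℤ) * n + j0 = m := Int.mul_ediv_add_emod m k
  set η : ℝ := (k * Complex.arg w - 2*π*m)/k with hηdef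
  have hηabs : |η| < π/(2*k) := by
    rw [hηdef, abs_div, abs_of_pos hkR, div_lt_iff₀ hkR]
    calc |k * Complex.arg w - 2*π*m| < π/2 := hm
      _ = π / (2*k) * k := by field_simp
  have hπpos := Real.pi_pos
  have hk1R : (1:ℝ) ≤ k := by exact_mod_cast hk
  have hηπ : |η| < π := by
    have : π/(2*k) ≤ π/2 := by
      apply div_le_div_of_nonneg_left hπpos.le (by linarith) (by linarith)
    linarith
  have hβ : Complex.arg w - 2 * π * (j0.toNat : ℕ) / k = η + 2*π*n := by
    have hcast : ((j0.toNat : ℕ) : ℝ) = (j0 : ℝ) := by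
      have h5 : (j0.toNat : ℤ) = j0 := Int.toNat_of_nonneg hj0
      exact_mod_cast congrArg (fun z : ℤ => (z:ℝ)) h5
    rw [hcast, hηdef]
    have : ((k:ℝ)) * n + (j0:ℝ) = (m:ℝ) := by exact_mod_cast hmnk
    field_simp
    nlinarith [this]
  have key : s8rot k j0.toNat * w
      = (‖w‖ : ℂ) * Complex.exp ((η:ℝ) * Complex.I) := by
    rw [s8_rot_mul k j0.toNat w _ rfl, hβ, s8_exp_shift]
  have habs : (0:ℝ) < ‖w‖ := by
    simpa [norm_pos_iff] using hw
  constructor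
  · show s8rot k j0.toNat * w ≠ 0
    rw [key]
    exact mul_ne_zero (by exact_mod_cast habs.ne') (Complex.exp_ne_zero _)
  · show |Complex.arg (s8rot k j0.toNat * w)| < π/k
    rw [key, s8_arg_aux habs hηπ]
    have : π/(2*k) < π/k := by
      apply div_lt_div_of_pos_left hπpos (by linarith) (by linarith)
    linarith

lemma s8_abs_rot (k j : ℕ) : ‖s8rot k j‖ = 1 := by
  rw [s8rot, Complex.norm_exp]
  simp

lemma s8_arg_rot_eq {k j : ℕ} {w : ℂ} (hw : w ≠ 0) :
    ∃ n : ℤ, Complex.arg (s8rot k j * w)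
      = Complex.arg w - 2*π*j/k + n*(2*π) := by
  have habs : (0:ℝ) < ‖w‖ := by simpa [norm_pos_iff] using hw
  have key := s8_rot_mul k j w _ rfl
  have habs2 : ‖s8rot k j * w‖ = ‖w‖ := by
    rw [norm_mul, s8_abs_rot, one_mul]
  have hpolar : (‖w‖ : ℂ) * Complex.exp ((Complex.arg (s8rot k j * w) : ℝ) * Complex.I)
      = (‖w‖ : ℂ) * Complex.exp ((Complex.arg w - 2*π*j/k : ℝ) * Complex.I) := by
    rw [← key, ← habs2, Complex.norm_mul_exp_arg_mul_I]
  have hexp : Complex.exp ((Complex.arg (s8rot k j * w) : ℝ) * Complex.I)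
      = Complex.exp ((Complex.arg w - 2*π*j/k : ℝ) * Complex.I) :=
    mul_left_cancel₀ (by exact_mod_cast habs.ne') hpolar
  obtain ⟨n, hn⟩ := Complex.exp_eq_exp_iff_exists_int.mp hexp
  refine ⟨n, ?_⟩
  have him := congrArg Complex.im hn
  simpa using him

lemma s8_disj {k : ℕ} (hk : 1 ≤ k) {i j : Fin k} (hij : i ≠ j) {w : ℂ}
    (hi : s8rot k i * w ∈ s8Slit k) (hj : s8rot k j * w ∈ s8Slit k) : False := by
  have hπpos := Real.pi_pos
  have hkR : (0:ℝ) < k := by exact_mod_cast hk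
  obtain ⟨hi0, hiarg⟩ := hi
  obtain ⟨hj0, hjarg⟩ := hj
  have hw : w ≠ 0 := fun hw0 => hi0 (by simp [hw0])
  obtain ⟨ni, hni⟩ := s8_arg_rot_eq (k := k) (j := i) hw
  obtain ⟨nj, hnj⟩ := s8_arg_rot_eq (k := k) (j := j) hw
  set θi := Complex.arg (s8rot k i * w)
  set θj := Complex.arg (s8rot k j * w)
  set Y : ℝ := (j:ℝ) - (i:ℝ) + ((ni - nj : ℤ):ℝ)*k with hY
  have hdiff : θi - θj = 2*π*Y/k := by
    rw [hni, hnj, hY]; push_cast; field_simp; ring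
  have hbound : |θi - θj| < 2*π/k := by
    calc |θi - θj| ≤ |θi| + |θj| := by
          rw [sub_eq_add_neg]; exact (abs_add_le _ _).trans (by rw [abs_neg])
      _ < π/k + π/k := add_lt_add hiarg hjarg
      _ = 2*π/k := by ring
  have hint : |Y| < 1 := by
    rw [hdiff] at hbound
    rw [abs_div, abs_of_pos hkR, div_lt_div_iff₀ hkR hkR] at hbound
    have h2 : |2*π*Y| = 2*π*|Y| := by
      rw [abs_mul, abs_of_pos (by linarith : (0:ℝ) < 2*π)]
    by_contra hge
    push_neg at hge
    rw [h2] at hbound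
    have h6 : (1:ℝ)*(2*π*k) ≤ |Y| * (2*π*k) := mul_le_mul_of_nonneg_right hge (by positivity)
    nlinarith
  set n : ℤ := ni - nj with hndef
  have hYc : ((((j:ℤ) - (i:ℤ) + n*k : ℤ)) : ℝ) = Y := by
    rw [hY, hndef]; push_cast; ring
  have hab := abs_lt.mp hint
  have hc1 : ((-1:ℤ) : ℝ) < ((((j:ℤ) - (i:ℤ) + n*k : ℤ)) : ℝ) := by
    rw [hYc]; exact_mod_cast hab.1
  have hc2 : ((((j:ℤ) - (i:ℤ) + n*k : ℤ)) : ℝ) < ((1:ℤ) : ℝ) := by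
    rw [hYc]; exact_mod_cast hab.2
  have hd1 : (-1:ℤ) < (j:ℤ) - (i:ℤ) + n*k := by exact_mod_cast hc1
  have hd2 : ((j:ℤ) - (i:ℤ) + n*k : ℤ) < 1 := by exact_mod_cast hc2
  have hintZ : ((j:ℤ) - (i:ℤ) + n*k : ℤ) = 0 := by omega
  have hik : (i:ℤ) < k := by exact_mod_cast i.2
  have hjk : (j:ℤ) < k := by exact_mod_cast j.2
  have hi0' : (0:ℤ) ≤ (i:ℤ) := by positivity
  have hj0' : (0:ℤ) ≤ (j:ℤ) := by positivity
  have hkZ : (0:ℤ) ≤ k := by positivity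
  have hijZ : (i:ℤ) ≠ (j:ℤ) := by
    intro hcon
    exact hij (Fin.ext (by exact_mod_cast hcon))
  rcases lt_trichotomy n 0 with hn | hn | hn
  · have h1 : n ≤ -1 := by omega
    have h5 : n*(k:ℤ) ≤ (-1)*k := mul_le_mul_of_nonneg_right h1 hkZ
    linarith
  · rw [hn, zero_mul] at hintZ
    omega
  · have h1 : 1 ≤ n := by omega
    have h5 : (1:ℤ)*k ≤ n*k := mul_le_mul_of_nonneg_right h1 hkZ
    linarith

lemma s8_ncard_components {X : Type*} [TopologicalSpace X] {S : Set X} {k : ℕ}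
    (U : Fin k → Set X) (hUo : ∀ j, IsOpen (U j))
    (hdisj : ∀ i j : Fin k, i ≠ j → ∀ x, x ∈ U i → x ∈ U j → False)
    (hcov : ∀ x ∈ S, ∃ j, x ∈ U j)
    (hconn : ∀ j, IsPreconnected (S ∩ U j))
    (hne : ∀ j, (S ∩ U j).Nonempty) :
    {T : Set X | ∃ u ∈ S, T = connectedComponentIn S u}.ncard = k := by
  have key : ∀ j : Fin k, ∀ u ∈ S ∩ U j, connectedComponentIn S u = S ∩ U j := by
    intro j u hu
    apply le_antisymm
    · -- ⊆
      intro x hx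
      have hC : IsPreconnected (connectedComponentIn S u) := isPreconnected_connectedComponentIn
      have hCS : connectedComponentIn S u ⊆ S := connectedComponentIn_subset S u
      set V : Set X := ⋃ i ∈ {i : Fin k | i ≠ j}, U i with hV
      have hVo : IsOpen V := isOpen_biUnion fun i _ => hUo i
      have hCsub : connectedComponentIn S u ⊆ U j ∪ V := by
        intro y hy
        obtain ⟨i, hi⟩ := hcov y (hCS hy)
        by_cases hij : i = j
        · exact Or.inl (hij ▸ hi)
        · exact Or.inr (Set.mem_biUnion hij hi)
      by_contra hnotin
      have hxV : x ∈ V := by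
        obtain ⟨i, hi⟩ := hcov x (hCS hx)
        by_cases hij : i = j
        · exact absurd (Set.mem_inter (hCS hx) (hij ▸ hi)) hnotin
        · exact Set.mem_biUnion hij hi
      have h1 : (connectedComponentIn S u ∩ U j).Nonempty :=
        ⟨u, mem_connectedComponentIn hu.1, hu.2⟩
      have h2 : (connectedComponentIn S u ∩ V).Nonempty := ⟨x, hx, hxV⟩
      obtain ⟨y, hyC, hyj, hyV⟩ := hC (U j) V (hUo j) hVo hCsub h1 h2
      obtain ⟨i, hi, hyi⟩ := Set.mem_iUnion₂.mp hyV
      exact hdisj i j hi y hyi hyj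
    · exact (hconn j).subset_connectedComponentIn hu (Set.inter_subset_left)
  have hSeq : {T : Set X | ∃ u ∈ S, T = connectedComponentIn S u}
      = Set.range (fun j : Fin k => S ∩ U j) := by
    ext T
    constructor
    · rintro ⟨u, huS, rfl⟩
      obtain ⟨j, hj⟩ := hcov u huS
      exact ⟨j, (key j u ⟨huS, hj⟩).symm⟩
    · rintro ⟨j, rfl⟩
      obtain ⟨u, hu⟩ := hne j
      exact ⟨u, hu.1, (key j u hu).symm⟩
  have hinj : Function.Injective (fun j : Fin k => S ∩ U j) := by
    intro i j hij
    by_contra hne'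
    obtain ⟨x, hx⟩ := hne i
    have hx' : x ∈ S ∩ U j := by
      have : S ∩ U i = S ∩ U j := hij
      rw [← this]; exact hx
    exact hdisj i j hne' x hx.2 hx'.2
  rw [hSeq, ← Set.image_univ, Set.ncard_image_of_injective _ hinj, Set.ncard_univ,
    Nat.card_eq_fintype_card, Fintype.card_fin]

lemma s8_mem_uIcc {a b x : ℝ} (h1 : min a b ≤ x) (h2 : x ≤ max a b) : x ∈ Set.uIcc a b := by
  rcases le_total a b with h | h
  · rw [Set.uIcc_of_le h]
    exact ⟨by rw [← min_eq_left h]; exact h1, by rw [← max_eq_right h]; exact h2⟩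
  · rw [Set.uIcc_of_ge h]
    exact ⟨by rw [← min_eq_right h]; exact h1, by rw [← max_eq_left h]; exact h2⟩

lemma s8_uIcc_bounds {a b x : ℝ} (h : x ∈ Set.uIcc a b) : min a b ≤ x ∧ x ≤ max a b := by
  rcases le_total a b with h' | h'
  · rw [Set.uIcc_of_le h'] at h
    exact ⟨by rw [min_eq_left h']; exact h.1, by rw [max_eq_right h']; exact h.2⟩
  · rw [Set.uIcc_of_ge h'] at h
    exact ⟨by rw [min_eq_right h']; exact h.1, by rw [max_eq_left h']; exact h.2⟩

lemma s8_seg_coord {u v x : ℝ × ℝ} (hx : x ∈ segment ℝ u v) :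
    x.1 ∈ Set.uIcc u.1 v.1 ∧ x.2 ∈ Set.uIcc u.2 v.2 := by
  obtain ⟨s1, s2, hs1, hs2, hsum, rfl⟩ := hx
  constructor
  · refine s8_mem_uIcc ?_ ?_
    · simpa using Convex.min_le_combo u.1 v.1 hs1 hs2 hsum
    · simpa using Convex.combo_le_max u.1 v.1 hs1 hs2 hsum
  · refine s8_mem_uIcc ?_ ?_
    · simpa using Convex.min_le_combo u.2 v.2 hs1 hs2 hsum
    · simpa using Convex.combo_le_max u.2 v.2 hs1 hs2 hsum

lemma s8_A_preconn {k : ℕ} (hk : 1 ≤ k) {a : ℝ} (ha : 0 < a) :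
    IsPreconnected {p : ℝ × ℝ | 0 < p.1 ∧ |p.2| < π/k ∧ a * p.1^k ≤ Real.cos (k * p.2)} := by
  have hπ := Real.pi_pos
  have hkR : (0:ℝ) < k := by exact_mod_cast hk
  have hπk : 0 < π/k := div_pos hπ hkR
  set A : Set (ℝ × ℝ) := {p : ℝ × ℝ | 0 < p.1 ∧ |p.2| < π/k ∧ a * p.1^k ≤ Real.cos (k * p.2)}
    with hA
  set t : ℝ := a⁻¹ ^ ((k:ℝ)⁻¹) with htdef
  have ht : 0 < t := Real.rpow_pos_of_pos (inv_pos.mpr ha) _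
  have htk : t ^ k = a⁻¹ := by
    rw [htdef, ← Real.rpow_natCast (a⁻¹ ^ ((k:ℝ)⁻¹)) k, ← Real.rpow_mul (by positivity),
      inv_mul_cancel₀ (by exact_mod_cast hkR.ne' : (k:ℝ) ≠ 0), Real.rpow_one]
  have hp₀ : ((t, 0) : ℝ × ℝ) ∈ A := by
    refine ⟨ht, by simpa using hπk, ?_⟩
    simp only [mul_zero, Real.cos_zero]
    rw [htk, mul_inv_cancel₀ ha.ne']
  -- elbow path for each point
  set C : ℝ × ℝ → Set (ℝ × ℝ) := fun p =>
    segment ℝ p (min p.1 t, p.2) ∪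
      (segment ℝ (min p.1 t, p.2) (min p.1 t, 0) ∪ segment ℝ (min p.1 t, 0) (t, 0)) with hC
  have hCsub : ∀ p ∈ A, C p ⊆ A := by
    rintro p ⟨hp1, hp2, hp3⟩ x hx
    have hm0 : 0 < min p.1 t := lt_min hp1 ht
    have hmp : min p.1 t ≤ p.1 := min_le_left _ _
    have hmt : min p.1 t ≤ t := min_le_right _ _
    have hcosmono : ∀ y z : ℝ, |y| ≤ |z| → |z| < π/k →
        Real.cos ((k:ℝ) * z) ≤ Real.cos ((k:ℝ) * y) := by
      intro y z hyz hz
      have h1 : |(k:ℝ) * y| ≤ |(k:ℝ) * z| := by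
        rw [abs_mul, abs_mul]
        exact mul_le_mul_of_nonneg_left hyz (abs_nonneg _)
      have h2 : |(k:ℝ) * z| ≤ π := by
        rw [abs_mul, abs_of_pos hkR]
        calc (k:ℝ) * |z| ≤ (k:ℝ) * (π/k) := mul_le_mul_of_nonneg_left hz.le hkR.le
          _ = π := by field_simp
      calc Real.cos ((k:ℝ) * z) = Real.cos |(k:ℝ) * z| := (Real.cos_abs _).symm
        _ ≤ Real.cos |(k:ℝ) * y| :=
            Real.cos_le_cos_of_nonneg_of_le_pi (abs_nonneg _) h2 h1
        _ = Real.cos ((k:ℝ) * y) := Real.cos_abs _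
    rcases hx with hx | hx | hx
    · obtain ⟨hx1, hx2⟩ := s8_seg_coord hx
      obtain ⟨hb1, hb2⟩ := s8_uIcc_bounds hx1
      have hx2' : x.2 = p.2 := by simpa using hx2
      rw [min_eq_right hmp] at hb1
      rw [max_eq_left hmp] at hb2
      refine ⟨lt_of_lt_of_le hm0 hb1, by rw [hx2']; exact hp2, ?_⟩
      rw [hx2']
      calc a * x.1^k ≤ a * p.1^k := by
            apply mul_le_mul_of_nonneg_left (pow_le_pow_left₀ (by linarith) hb2 k) ha.le
        _ ≤ Real.cos (k * p.2) := hp3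
    · obtain ⟨hx1, hx2⟩ := s8_seg_coord hx
      have hx1' : x.1 = min p.1 t := by simpa using hx1
      obtain ⟨hb1, hb2⟩ := s8_uIcc_bounds hx2
      have habs : |x.2| ≤ |p.2| := by
        rw [abs_le]
        constructor
        · calc -|p.2| ≤ min p.2 0 := le_min (neg_abs_le p.2) (by simp [abs_nonneg])
            _ ≤ x.2 := by simpa using hb1
        · calc x.2 ≤ max p.2 0 := by simpa using hb2
            _ ≤ |p.2| := max_le (le_abs_self p.2) (abs_nonneg _)
      refine ⟨by rw [hx1']; exact hm0, lt_of_le_of_lt habs hp2, ?_⟩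
      calc a * x.1^k ≤ a * p.1^k := by
            apply mul_le_mul_of_nonneg_left
              (pow_le_pow_left₀ (by rw [hx1']; exact hm0.le) (by rw [hx1']; exact hmp) k) ha.le
        _ ≤ Real.cos (k * p.2) := hp3
        _ ≤ Real.cos (k * x.2) := hcosmono x.2 p.2 habs hp2
    · obtain ⟨hx1, hx2⟩ := s8_seg_coord hx
      have hx2' : x.2 = 0 := by simpa using hx2
      obtain ⟨hb1, hb2⟩ := s8_uIcc_bounds hx1
      rw [min_eq_left hmt] at hb1
      rw [max_eq_right hmt] at hb2
      refine ⟨lt_of_lt_of_le hm0 hb1, by rw [hx2']; simpa using hπk, ?_⟩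
      rw [hx2', mul_zero, Real.cos_zero]
      calc a * x.1^k ≤ a * t^k := by
            apply mul_le_mul_of_nonneg_left (pow_le_pow_left₀ (by linarith) hb2 k) ha.le
        _ = 1 := by rw [htk, mul_inv_cancel₀ ha.ne']
  -- C p is preconnected and contains p and p₀
  have hCconn : ∀ p : ℝ × ℝ, IsPreconnected (C p) := by
    intro p
    apply IsPreconnected.union (min p.1 t, p.2)
    · exact right_mem_segment ℝ _ _
    · exact Or.inl (left_mem_segment ℝ _ _)
    · exact (convex_segment _ _).isPreconnected
    · apply IsPreconnected.union (min p.1 t, 0)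
      · exact right_mem_segment ℝ _ _
      · exact left_mem_segment ℝ _ _
      · exact (convex_segment _ _).isPreconnected
      · exact (convex_segment _ _).isPreconnected
  have hAeq : A = ⋃₀ (C '' A) := by
    ext x
    constructor
    · intro hx
      exact ⟨C x, ⟨x, hx, rfl⟩, Or.inl (left_mem_segment ℝ _ _)⟩
    · rintro ⟨s, ⟨p, hp, rfl⟩, hxs⟩
      exact hCsub p hp hxs
  rw [hAeq]
  apply isPreconnected_sUnion ((t, 0) : ℝ × ℝ)
  · rintro s ⟨p, hp, rfl⟩
    exact Or.inr (Or.inr (right_mem_segment ℝ _ _))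
  · rintro s ⟨p, hp, rfl⟩
    exact hCconn p

lemma s8_pi_div_k_le_pi {k : ℕ} (hk : 1 ≤ k) : π/k ≤ π := by
  have hπ := Real.pi_pos
  have h1 : (1:ℝ) ≤ k := by exact_mod_cast hk
  rw [div_le_iff₀ (by linarith)]
  nlinarith

lemma s8_petal0_eq {k : ℕ} (hk : 1 ≤ k) {a : ℝ} (ha : 0 < a) :
    {w : ℂ | w ∈ s8Slit k ∧ a ≤ ((w^k)⁻¹).re}
      = (fun p : ℝ × ℝ => (p.1:ℂ) * Complex.exp ((p.2:ℝ) * Complex.I)) ''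
        {p : ℝ × ℝ | 0 < p.1 ∧ |p.2| < π/k ∧ a * p.1^k ≤ Real.cos (k * p.2)} := by
  have hkR : (0:ℝ) < k := by exact_mod_cast hk
  ext w
  constructor
  · rintro ⟨⟨hw0, hwarg⟩, hwre⟩
    have habs : 0 < ‖w‖ := by simpa [norm_pos_iff] using hw0
    refine ⟨(‖w‖, Complex.arg w), ⟨habs, hwarg, ?_⟩,
      Complex.norm_mul_exp_arg_mul_I w⟩
    have hre : ((w^k)⁻¹).re = ((‖w‖)^k)⁻¹ * Real.cos (k * Complex.arg w) := by
      conv_lhs => rw [← Complex.norm_mul_exp_arg_mul_I w]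
      exact s8_re_aux _ _ k
    rw [hre, inv_mul_eq_div, le_div_iff₀ (pow_pos habs k)] at hwre
    linarith [hwre]
  · rintro ⟨p, ⟨hp1, hp2, hp3⟩, rfl⟩
    have hπpos := Real.pi_pos
    have harg : Complex.arg ((p.1:ℂ) * Complex.exp ((p.2:ℝ) * Complex.I)) = p.2 :=
      s8_arg_aux hp1 (lt_of_lt_of_le hp2 (s8_pi_div_k_le_pi hk))
    refine ⟨⟨mul_ne_zero (by exact_mod_cast hp1.ne') (Complex.exp_ne_zero _), ?_⟩, ?_⟩
    · rw [harg]; exact hp2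
    · rw [s8_re_aux _ _ k, inv_mul_eq_div, le_div_iff₀ (pow_pos hp1 k)]
      linarith [hp3]

lemma s8_rot_pow {k : ℕ} (hk : 1 ≤ k) (j : ℕ) : s8rot k j ^ k = 1 := by
  have hkR : (0:ℝ) < k := by exact_mod_cast hk
  rw [s8rot, ← Complex.exp_nat_mul]
  have heq : (k:ℂ) * ((-(2*π*j/k : ℝ) : ℂ) * Complex.I)
      = ((0 + 2*π*((-(j:ℤ)):ℤ) : ℝ) : ℂ) * Complex.I := by
    push_cast
    have : (k:ℂ) ≠ 0 := by exact_mod_cast hkR.ne'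
    field_simp
    ring
  rw [heq, s8_exp_shift 0 (-(j:ℤ))]
  simp

lemma s8_petal_preconn {k : ℕ} (hk : 1 ≤ k) {a : ℝ} (ha : 0 < a) (j : ℕ) :
    IsPreconnected {w : ℂ | s8rot k j * w ∈ s8Slit k ∧ a ≤ ((w^k)⁻¹).re} := by
  have hrotne := s8rot_ne k j
  have hQ0 : IsPreconnected {w : ℂ | w ∈ s8Slit k ∧ a ≤ ((w^k)⁻¹).re} := by
    rw [s8_petal0_eq hk ha]
    apply IsPreconnected.image (s8_A_preconn hk ha)
    apply Continuous.continuousOn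
    continuity
  have heq : {w : ℂ | s8rot k j * w ∈ s8Slit k ∧ a ≤ ((w^k)⁻¹).re}
      = (fun v : ℂ => (s8rot k j)⁻¹ * v) '' {w : ℂ | w ∈ s8Slit k ∧ a ≤ ((w^k)⁻¹).re} := by
    ext w
    constructor
    · rintro ⟨hslit, hre⟩
      refine ⟨s8rot k j * w, ⟨hslit, ?_⟩, by field_simp⟩
      rw [mul_pow, s8_rot_pow hk j, one_mul]
      exact hre
    · rintro ⟨v, ⟨hslit, hre⟩, rfl⟩
      constructor
      · rw [show s8rot k j * ((s8rot k j)⁻¹ * v) = v by field_simp]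
        exact hslit
      · rw [mul_pow, inv_pow, s8_rot_pow hk j, inv_one, one_mul]
        exact hre
  rw [heq]
  exact hQ0.image _ (Continuous.continuousOn (by continuity))

lemma s8_rpow_pow {k : ℕ} (hk : 1 ≤ k) {a : ℝ} (ha : 0 < a) :
    (a⁻¹ ^ ((k:ℝ)⁻¹)) ^ k = a⁻¹ := by
  have hkR : (0:ℝ) < k := by exact_mod_cast hk
  rw [← Real.rpow_natCast (a⁻¹ ^ ((k:ℝ)⁻¹)) k, ← Real.rpow_mul (by positivity),
    inv_mul_cancel₀ hkR.ne', Real.rpow_one]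

lemma s8_petal_nonempty {k : ℕ} (hk : 1 ≤ k) {a : ℝ} (ha : 0 < a) (j : ℕ) :
    {w : ℂ | s8rot k j * w ∈ s8Slit k ∧ a ≤ ((w^k)⁻¹).re}.Nonempty := by
  have hkR : (0:ℝ) < k := by exact_mod_cast hk
  set t : ℝ := a⁻¹ ^ ((k:ℝ)⁻¹) with htdef
  have ht : 0 < t := Real.rpow_pos_of_pos (inv_pos.mpr ha) _
  have htk : t ^ k = a⁻¹ := s8_rpow_pow hk ha
  refine ⟨(t:ℂ) * Complex.exp ((2*π*j/k : ℝ) * Complex.I), ?_, ?_⟩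
  · have hrw : s8rot k j * ((t:ℂ) * Complex.exp ((2*π*j/k:ℝ) * Complex.I)) = (t:ℂ) := by
      rw [s8rot, mul_comm ((t:ℂ)) (Complex.exp _), ← mul_assoc, ← Complex.exp_add]
      have : (-(2*π*j/k : ℝ) : ℂ) * Complex.I + ((2*π*j/k:ℝ) : ℂ) * Complex.I = 0 := by
        push_cast; ring
      rw [this, Complex.exp_zero, one_mul]
    rw [hrw]
    refine ⟨by exact_mod_cast ht.ne', ?_⟩
    rw [Complex.arg_ofReal_of_nonneg ht.le]
    simpa using div_pos Real.pi_pos hkR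
  · have hwk : ((t:ℂ) * Complex.exp ((2*π*j/k:ℝ) * Complex.I))^k = ((t^k : ℝ) : ℂ) := by
      rw [mul_pow, ← Complex.exp_nat_mul]
      have heq2 : (k:ℂ) * (((2*π*j/k:ℝ) : ℂ) * Complex.I)
          = ((0 + 2*π*((j:ℤ)) : ℝ) : ℂ) * Complex.I := by
        push_cast
        have : (k:ℂ) ≠ 0 := by exact_mod_cast hkR.ne'
        field_simp
        ring
      rw [heq2, s8_exp_shift 0 (j:ℤ)]
      push_cast
      simp
    show a ≤ _
    rw [hwk, htk, ← Complex.ofReal_inv, inv_inv, Complex.ofReal_re]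

/-- Let `φ` be holomorphic on a punctured disk of radius `r` centered at `0`,
with a pole of order exactly `k ≥ 1` at `0` (i.e. `u^k·φ(u)` extends to a
holomorphic function `h` on the full disk with `h 0 ≠ 0`).  Then there are
`ε ∈ (0, r]` and `a₀ > 0` such that for every real `a ≥ a₀`, the region
`{u : 0 < |u| < ε, Re φ(u) ≥ a}` has exactly `k` connected components. -/
theorem statement8 (r : ℝ) (hr : 0 < r) (k : ℕ) (hk : 1 ≤ k)
    (φ h : ℂ → ℂ)
    (hφ : DifferentiableOn ℂ φ {u : ℂ | 0 < ‖u‖ ∧ ‖u‖ < r})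
    (hh : DifferentiableOn ℂ h (Metric.ball 0 r))
    (hne : h 0 ≠ 0)
    (heq : ∀ u : ℂ, 0 < ‖u‖ → ‖u‖ < r → h u = u ^ k * φ u) :
    ∃ ε : ℝ, ε ∈ Set.Ioc 0 r ∧ ∃ a₀ : ℝ, 0 < a₀ ∧ ∀ a : ℝ, a₀ ≤ a →
      {T : Set ℂ | ∃ u : ℂ,
          (0 < ‖u‖ ∧ ‖u‖ < ε ∧ a ≤ (φ u).re) ∧
          T = connectedComponentIn
                {u' : ℂ | 0 < ‖u'‖ ∧ ‖u'‖ < ε ∧ a ≤ (φ u').re}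
                u}.ncard = k := by
  classical
  have hπ := Real.pi_pos
  have hkR : (0:ℝ) < k := by exact_mod_cast hk
  have hkC : (k:ℂ) ≠ 0 := by exact_mod_cast hkR.ne'
  set c : ℂ := h 0 with hcdef
  have habsc : 0 < ‖c‖ := by simpa [norm_pos_iff] using hne
  -- ε₁ : radius where h is close to c
  have hcont : ContinuousAt h 0 :=
    hh.continuousOn.continuousAt (Metric.isOpen_ball.mem_nhds (Metric.mem_ball_self hr))
  obtain ⟨ε₁', hε₁'pos, hε₁'⟩ := Metric.continuousAt_iff.mp hcont (‖c‖ / 2)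
    (by positivity)
  set ε₁ : ℝ := min ε₁' r with hε₁def
  have hε₁pos : 0 < ε₁ := lt_min hε₁'pos hr
  have hε₁r : ε₁ ≤ r := min_le_right _ _
  have hclose : ∀ u : ℂ, ‖u‖ < ε₁ → ‖h u - c‖ < ‖c‖ / 2 := by
    intro u hu
    have : dist u 0 < ε₁' := by
      rw [Complex.dist_eq, sub_zero]; exact lt_of_lt_of_le hu (min_le_left _ _)
    simpa [Complex.dist_eq, hcdef] using hε₁' this
  have hhne : ∀ u : ℂ, ‖u‖ < ε₁ → h u ≠ 0 := by
    intro u hu h0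
    have := hclose u hu
    rw [h0, zero_sub, norm_neg] at this
    linarith
  have hslit : ∀ u : ℂ, ‖u‖ < ε₁ → h u / c ∈ Complex.slitPlane := by
    intro u hu
    have h1 := hclose u hu
    have h2 : ‖h u / c - 1‖ < 1/2 := by
      rw [show h u / c - 1 = (h u - c) / c by field_simp, norm_div]
      rw [div_lt_iff₀ habsc]
      calc ‖h u - c‖ < ‖c‖ / 2 := h1
        _ = 1/2 * ‖c‖ := by ring
    apply Complex.mem_slitPlane_iff.mpr
    left
    have h3 : |(h u / c - 1).re| ≤ ‖h u / c - 1‖ := Complex.abs_re_le_norm _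
    have h4 : (h u / c - 1).re = (h u / c).re - 1 := by simp
    have h5 := neg_abs_le (h u / c - 1).re
    linarith
  -- the k-th root coordinate ψ
  set d : ℂ := Complex.exp (Complex.log c / k) with hddef
  have hdk : d ^ k = c := by
    rw [hddef, ← Complex.exp_nat_mul, mul_div_cancel₀ _ hkC, Complex.exp_log hne]
  have hdne : d ≠ 0 := Complex.exp_ne_zero _
  set ξ : ℂ → ℂ := fun u => Complex.exp (-(Complex.log (h u / c) / k)) * d⁻¹ with hξdef
  set ψ : ℂ → ℂ := fun u => u * ξ u with hψdef
  have hξne : ∀ u, ξ u ≠ 0 := fun u =>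
    mul_ne_zero (Complex.exp_ne_zero _) (inv_ne_zero hdne)
  have hξk : ∀ u : ℂ, ‖u‖ < ε₁ → ξ u ^ k = (h u)⁻¹ := by
    intro u hu
    have hgne : h u / c ≠ 0 := div_ne_zero (hhne u hu) hne
    rw [hξdef]
    simp only
    rw [mul_pow, ← Complex.exp_nat_mul, inv_pow, hdk]
    rw [show (k:ℂ) * (-(Complex.log (h u / c) / k)) = -Complex.log (h u / c) by
      field_simp]
    rw [Complex.exp_neg, Complex.exp_log hgne]
    field_simp
  have hψk : ∀ u : ℂ, ‖u‖ < ε₁ → ψ u ^ k = u ^ k * (h u)⁻¹ := by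
    intro u hu
    rw [hψdef]
    simp only
    rw [mul_pow, hξk u hu]
  have hφψ : ∀ u : ℂ, 0 < ‖u‖ → ‖u‖ < ε₁ → φ u = ((ψ u) ^ k)⁻¹ := by
    intro u hupos hu
    have hu0 : u ≠ 0 := by simpa [norm_pos_iff] using hupos
    have huk : u ^ k ≠ 0 := pow_ne_zero _ hu0
    have hheq := heq u hupos (lt_of_lt_of_le hu hε₁r)
    rw [hψk u hu, mul_inv, inv_inv, hheq]
    field_simp
  -- differentiability of ψ on ball 0 ε₁
  have hmemball : ∀ u : ℂ, u ∈ Metric.ball (0:ℂ) ε₁ ↔ ‖u‖ < ε₁ := by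
    intro u; rw [Metric.mem_ball, Complex.dist_eq, sub_zero]
  have hξdiff : DifferentiableOn ℂ ξ (Metric.ball 0 ε₁) := by
    intro u hu
    have hu' : ‖u‖ < ε₁ := (hmemball u).mp hu
    have h1 : DifferentiableWithinAt ℂ (fun v => h v / c) (Metric.ball 0 ε₁) u :=
      ((hh.mono (Metric.ball_subset_ball hε₁r)) u hu).div_const c
    have h2 : DifferentiableWithinAt ℂ (fun v => Complex.log (h v / c))
        (Metric.ball 0 ε₁) u :=
      (Complex.differentiableAt_log (hslit u hu')).comp_differentiableWithinAt (f := fun v => h v / c) u h1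
    exact (((h2.div_const (k:ℂ)).neg).cexp).mul_const _
  have hψdiff : DifferentiableOn ℂ ψ (Metric.ball 0 ε₁) :=
    (differentiable_id.differentiableOn).mul hξdiff
  have hmem0 : Metric.ball (0:ℂ) ε₁ ∈ nhds 0 :=
    Metric.isOpen_ball.mem_nhds (Metric.mem_ball_self hε₁pos)
  have hψ0 : ψ 0 = 0 := zero_mul _
  -- strict derivative of ψ at 0
  have hξdAt : DifferentiableAt ℂ ξ 0 := hξdiff.differentiableAt hmem0
  have hd1 : HasDerivAt ψ (ξ 0) 0 := by
    have := (hasDerivAt_id (0:ℂ)).mul hξdAt.hasDerivAt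
    simp at this; exact this
  obtain ⟨p, hp⟩ := hψdiff.analyticAt hmem0
  have hstrict : HasStrictDerivAt ψ (ξ 0) 0 := by
    have h0 := hp.hasStrictDerivAt
    rwa [h0.hasDerivAt.unique hd1] at h0
  set F := hstrict.hasStrictFDerivAt_equiv (hξne 0) with hFdef
  set e := HasStrictFDerivAt.toOpenPartialHomeomorph ψ F with hedef
  have hecoe : ⇑e = ψ := HasStrictFDerivAt.toOpenPartialHomeomorph_coe F
  have hsource : (0:ℂ) ∈ e.source := HasStrictFDerivAt.mem_toOpenPartialHomeomorph_source F
  have h0t : (0:ℂ) ∈ e.target := by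
    have := e.map_source hsource
    rwa [hecoe, hψ0] at this
  -- choose ε
  obtain ⟨ε₂, hε₂pos, hε₂sub⟩ := Metric.isOpen_iff.mp e.open_source 0 hsource
  set ε : ℝ := min ε₂ ε₁ with hεdef
  have hεpos : 0 < ε := lt_min hε₂pos hε₁pos
  have hεr : ε ≤ r := le_trans (min_le_right _ _) hε₁r
  have hballsource : Metric.ball (0:ℂ) ε ⊆ e.source :=
    (Metric.ball_subset_ball (min_le_left _ _)).trans hε₂sub
  have hballε₁ : Metric.ball (0:ℂ) ε ⊆ Metric.ball (0:ℂ) ε₁ :=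
    Metric.ball_subset_ball (min_le_right _ _)
  -- choose δ
  have hsymm0 : e.symm 0 = 0 := by
    have h1 := e.left_inv hsource
    rw [hecoe, hψ0] at h1
    exact h1
  have hsymmcont : ContinuousAt e.symm 0 :=
    e.symm.continuousAt (by rw [OpenPartialHomeomorph.symm_source]; exact h0t)
  have h1 : (e.symm)⁻¹' (Metric.ball 0 ε) ∈ nhds (0:ℂ) := by
    apply hsymmcont.preimage_mem_nhds
    rw [hsymm0]
    exact Metric.ball_mem_nhds _ hεpos
  have h2 : e.target ∈ nhds (0:ℂ) := e.open_target.mem_nhds h0t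
  obtain ⟨δ, hδpos, hδsub⟩ := Metric.mem_nhds_iff.mp (Filter.inter_mem h1 h2)
  refine ⟨ε, ⟨hεpos, hεr⟩, (δ^k)⁻¹ + 1, by positivity, ?_⟩
  intro a haa
  have hδk : (0:ℝ) < δ^k := pow_pos hδpos k
  have ha : 0 < a := lt_of_lt_of_le (by positivity) haa
  have hainv : a⁻¹ < δ^k := by
    have h3 : (1:ℝ) < a * δ^k := by
      nlinarith [mul_le_mul_of_nonneg_right haa hδk.le, inv_mul_cancel₀ hδk.ne']
    rw [inv_lt_iff_one_lt_mul₀ ha]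
    linarith [h3]
  set S : Set ℂ := {u' : ℂ | 0 < ‖u'‖ ∧ ‖u'‖ < ε ∧ a ≤ (φ u').re}
    with hSdef
  set U : Fin k → Set ℂ :=
    fun j => Metric.ball (0:ℂ) ε₁ ∩ (fun u => s8rot k j * ψ u) ⁻¹' (s8Slit k) with hUdef
  -- the petals in the w-coordinate
  set Q : Fin k → Set ℂ :=
    fun j => {w : ℂ | s8rot k (j:ℕ) * w ∈ s8Slit k ∧ a ≤ ((w^k)⁻¹).re} with hQdef
  have hQδ : ∀ j : Fin k, Q j ⊆ Metric.ball (0:ℂ) δ := by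
    intro j w hw
    obtain ⟨⟨hw1, _⟩, hw2⟩ := hw
    have hwne : w ≠ 0 := by
      intro h0; rw [h0, mul_zero] at hw1; exact hw1 rfl
    have habsw : 0 < ‖w‖ := by simpa [norm_pos_iff] using hwne
    have hre : ((w^k)⁻¹).re ≤ ((‖w‖)^k)⁻¹ := by
      calc ((w^k)⁻¹).re ≤ ‖(w^k)⁻¹‖ := Complex.re_le_norm _
        _ = ((‖w‖)^k)⁻¹ := by rw [norm_inv, norm_pow]
    have h4 : a ≤ ((‖w‖)^k)⁻¹ := le_trans hw2 hre
    have h5 : (‖w‖)^k ≤ a⁻¹ := by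
      have hpk : (0:ℝ) < (‖w‖)^k := pow_pos habsw k
      rw [← inv_inv ((‖w‖)^k)]
      exact inv_anti₀ ha h4
    have h6 : (‖w‖)^k < δ^k := lt_of_le_of_lt h5 hainv
    have h7 : ‖w‖ < δ := by
      by_contra hcon
      push_neg at hcon
      exact absurd (pow_le_pow_left₀ hδpos.le hcon k) (not_le.mpr h6)
    rw [Metric.mem_ball, Complex.dist_eq, sub_zero]
    exact h7
  -- key : S ∩ U j = e.symm '' Q j
  have hkey : ∀ j : Fin k, S ∩ U j = e.symm '' Q j := by
    intro j
    ext u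
    constructor
    · rintro ⟨⟨hu1, hu2, hu3⟩, huU⟩
      have huε₁ : ‖u‖ < ε₁ := lt_of_lt_of_le hu2 (min_le_right _ _)
      have huball : u ∈ Metric.ball (0:ℂ) ε := by
        rw [Metric.mem_ball, Complex.dist_eq, sub_zero]; exact hu2
      have husource : u ∈ e.source := hballsource huball
      refine ⟨ψ u, ⟨huU.2, ?_⟩, ?_⟩
      · rw [← hφψ u hu1 huε₁]; exact hu3
      · have := e.left_inv husource
        rwa [hecoe] at this
    · rintro ⟨w, hwQ, rfl⟩
      have hwδ : w ∈ Metric.ball (0:ℂ) δ := hQδ j hwQ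
      have hwt : w ∈ e.target := (hδsub hwδ).2
      have huball : e.symm w ∈ Metric.ball (0:ℂ) ε := (hδsub hwδ).1
      have husource : e.symm w ∈ e.source := e.map_target hwt
      have hψu : ψ (e.symm w) = w := by
        have := e.right_inv hwt
        rwa [hecoe] at this
      obtain ⟨⟨hw1, hw1'⟩, hw2⟩ := hwQ
      have hwne : w ≠ 0 := by
        intro h0; rw [h0, mul_zero] at hw1; exact hw1 rfl
      have hu0 : e.symm w ≠ 0 := by
        intro h0
        rw [h0, hψ0] at hψu
        exact hwne hψu.symm
      have huabs : 0 < ‖e.symm w‖ := by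
        simpa [norm_pos_iff] using hu0
      have huε : ‖e.symm w‖ < ε := by
        rw [Metric.mem_ball, Complex.dist_eq, sub_zero] at huball; exact huball
      have huε₁ : ‖e.symm w‖ < ε₁ := lt_of_lt_of_le huε (min_le_right _ _)
      refine ⟨⟨huabs, huε, ?_⟩, ?_, ?_⟩
      · rw [hφψ _ huabs huε₁, hψu]; exact hw2
      · rw [hmemball]; exact huε₁
      · show s8rot k (j:ℕ) * ψ (e.symm w) ∈ s8Slit k
        rw [hψu]; exact ⟨hw1, hw1'⟩
  -- apply the counting lemma
  have := s8_ncard_components (S := S) U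
    (fun j => by
      apply ContinuousOn.isOpen_inter_preimage
      · exact continuousOn_const.mul hψdiff.continuousOn
      · exact Metric.isOpen_ball
      · exact s8_isOpen_slit hk)
    (fun i j hij x hxi hxj => s8_disj hk hij hxi.2 hxj.2)
    (fun u hu => by
      obtain ⟨hu1, hu2, hu3⟩ := hu
      have huε₁ : ‖u‖ < ε₁ := lt_of_lt_of_le hu2 (min_le_right _ _)
      have hu0 : u ≠ 0 := by simpa [norm_pos_iff] using hu1
      have hψune : ψ u ≠ 0 := mul_ne_zero hu0 (hξne u)
      have habsψ : 0 < ‖ψ u‖ := by simpa [norm_pos_iff] using hψune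
      have hre : a ≤ ((ψ u ^ k)⁻¹).re := by
        rw [← hφψ u hu1 huε₁]; exact hu3
      have hre2 : ((ψ u ^ k)⁻¹).re
          = ((‖ψ u‖)^k)⁻¹ * Real.cos (k * Complex.arg (ψ u)) := by
        conv_lhs => rw [← Complex.norm_mul_exp_arg_mul_I (ψ u)]
        exact s8_re_aux _ _ k
      have hcos : 0 < Real.cos (k * Complex.arg (ψ u)) := by
        rw [hre2] at hre
        by_contra hcon
        push_neg at hcon
        have hpk : (0:ℝ) < ((‖ψ u‖)^k)⁻¹ := by positivity
        nlinarith
      obtain ⟨j, hj⟩ := s8_cover hk hψune hcos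
      exact ⟨j, by rw [hmemball]; exact huε₁, hj⟩)
    (fun j => by
      rw [hkey j]
      apply IsPreconnected.image (s8_petal_preconn hk ha (j:ℕ))
      exact e.continuousOn_symm.mono ((hQδ j).trans (fun w hw => (hδsub hw).2)))
    (fun j => by
      rw [hkey j]
      exact (s8_petal_nonempty hk ha (j:ℕ)).image _)
  exact this
end
end Statement8Aux
end
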